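/- arXiv:2011.11427 — 7 statements merged into one kernel-verified Lean document; each statement's English description precedes it below -/
import Mathlib

section
/- Let k ≥ 2 and n ≥ (2k)^{8k²} be integers, and let α, β be real numbers with (2k+1)/(8k+6) < α ≤ 1/4 and 1/2 − 2α ≤ β ≤ α/(2k+1). If G is a C_{2k+1}-free graph on n vertices with e(G) ≥ αn² and minimum degree δ(G) ≥ (1/2 − β)n, then G is bipartite. -/
open SimpleGraph

/-- `G` contains a copy of `H` as a (not necessarily induced) subgraph. -/
def HasSubCopy {α β : Type*} (H : SimpleGraph α) (G : SimpleGraph β) : Prop :=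
  ∃ f : H →g G, Function.Injective f

/-- `G` is `C_m`-free: it contains no copy of the cycle on `m` vertices. -/
def CycleFree (m : ℕ) {β : Type*} (G : SimpleGraph β) : Prop :=
  ¬ HasSubCopy (cycleGraph m) G

/-- A graph is bipartite: its vertex set splits into two independent sets. -/
def IsBipartite {β : Type*} (G : SimpleGraph β) : Prop :=
  ∃ A : Set β, (∀ u ∈ A, ∀ v ∈ A, ¬ G.Adj u v) ∧ (∀ u ∉ A, ∀ v ∉ A, ¬ G.Adj u v)

/-!
A shortest odd closed walk of length `g ≥ 5` passes at most twice through the neighbourhood of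
any vertex (a third visit would close a shorter odd walk), so `g * δ ≤ 2 * n`; as
`β ≤ α / (2k + 1) ≤ 1/20` gives `δ ≥ 9n/20`, the graph contains a triangle.

A cycle `c₀ … c_{m-1}` with `3δ ≥ n + 2m + 2` extends to a cycle of length `m + 2`: let `X j` be
the neighbours of `c j` off the cycle. An edge between `X j` and `X (j + 1)` would give a detour
around the edge `c j c (j + 1)`, so for `a ∈ X j` the neighbourhood of `a` misses
`X (j - 1) ∪ X (j + 1)`, and counting forces `|X (j - 1) ∩ X (j + 1)| ≥ 2`. Choosing
`a ∈ X (-1) ∩ X 1` and `b ≠ a` in `X 0 ∩ X 2` yields the cycle `c₀ b c₂ … c_{m-1} a c₁`.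
Starting from the triangle this reaches `C_{2k+1}`.
-/

namespace SimpleGraph

open Finset

variable {V : Type*} {G : SimpleGraph V}

theorem isBipartite_of_colorable_two (h : G.Colorable 2) : _root_.IsBipartite G := by
  obtain ⟨C⟩ := h
  refine ⟨{v | C v = 0}, fun u hu v hv huv => C.valid huv (hu.trans hv.symm), ?_⟩
  intro u hu v hv huv
  exact C.valid huv ((Fin.eq_one_of_ne_zero _ hu).trans (Fin.eq_one_of_ne_zero _ hv).symm)

theorem exists_odd_closed_walk_of_not_isBipartite (h : ¬ _root_.IsBipartite G) :
    ∃ u, ∃ w : G.Walk u u, Odd w.length := by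
  by_contra! hw
  exact h (isBipartite_of_colorable_two
    (two_colorable_iff_forall_loop_even.2 fun u w => Nat.not_odd_iff_even.1 (hw u w)))

/-- The two closed walks through `v`: along `w` from position `i` to `j`, or around the rest. -/
theorem Walk.exists_closed_walks_of_adj_getVert {u v : V} (w : G.Walk u u) {i j : ℕ}
    (hij : i ≤ j) (hj : j ≤ w.length) (hvi : G.Adj v (w.getVert i))
    (hvj : G.Adj v (w.getVert j)) :
    (∃ x, ∃ p : G.Walk x x, p.length = j - i + 2) ∧
      ∃ x, ∃ p : G.Walk x x, p.length = w.length - (j - i) + 2 := by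
  have hseg : (w.drop i).getVert (j - i) = w.getVert j := by
    rw [Walk.drop_getVert, Nat.add_sub_cancel' hij]
  let back : G.Walk (w.getVert j) (w.getVert i) := .cons hvj.symm (.cons hvi .nil)
  refine ⟨⟨_, ((w.drop i).take (j - i)).append (back.copy hseg.symm rfl), ?_⟩,
    ⟨_, (w.drop j).append ((w.take i).append back.reverse), ?_⟩⟩
  · simp only [length_append, take_length, drop_length, length_copy, length_cons, length_nil,
      back]
    omega
  · simp only [length_append, drop_length, take_length, length_reverse, length_cons, length_nil,
      back]
    omega

theorem exists_shortest_odd_closed_walk (h : ∃ u, ∃ w : G.Walk u u, Odd w.length) :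
    ∃ u, ∃ w : G.Walk u u, Odd w.length ∧
      ∀ x, ∀ p : G.Walk x x, Odd p.length → w.length ≤ p.length := by
  classical
  have hex : ∃ ℓ, ∃ u, ∃ w : G.Walk u u, Odd w.length ∧ w.length = ℓ :=
    let ⟨u, w, hw⟩ := h; ⟨_, u, w, hw, rfl⟩
  obtain ⟨u, w, hw, hlen⟩ := Nat.find_spec hex
  exact ⟨u, w, hw, fun x p hp => hlen ▸ Nat.find_min' hex ⟨x, p, hp, rfl⟩⟩

section ShortestOddClosedWalk

variable {u : V} {w : G.Walk u u} (hw : Odd w.length)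
  (hmin : ∀ x, ∀ p : G.Walk x x, Odd p.length → w.length ≤ p.length)
include hw hmin

theorem Walk.sub_eq_of_adj_getVert_of_shortest_odd {v : V} {i j : ℕ} (hij : i < j)
    (hj : j < w.length) (hvi : G.Adj v (w.getVert i)) (hvj : G.Adj v (w.getVert j)) :
    j - i = 2 ∨ j - i = w.length - 2 := by
  obtain ⟨⟨x, p, hp⟩, ⟨y, q, hq⟩⟩ := w.exists_closed_walks_of_adj_getVert hij.le hj.le hvi hvj
  have hw2 := Nat.odd_iff.1 hw
  rcases Nat.even_or_odd (j - i) with he | ho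
  · have he2 := Nat.even_iff.1 he
    have := hmin y q (Nat.odd_iff.2 (by omega))
    omega
  · have ho2 := Nat.odd_iff.1 ho
    have := hmin x p (Nat.odd_iff.2 (by omega))
    omega

theorem Walk.card_filter_adj_getVert_le_two_of_shortest_odd [DecidableRel G.Adj]
    (hg : 5 ≤ w.length) (v : V) : #{i ∈ range w.length | G.Adj (w.getVert i) v} ≤ 2 := by
  by_contra! h3
  obtain ⟨a, ha, b, hb, c, hc, hab, hac, hbc⟩ := two_lt_card.1 h3
  simp only [mem_filter, mem_range] at ha hb hc
  have gap : ∀ i j, i < w.length → j < w.length → G.Adj (w.getVert i) v →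
      G.Adj (w.getVert j) v → i < j → j - i = 2 ∨ j - i = w.length - 2 :=
    fun i j hi hj hvi hvj hij =>
      w.sub_eq_of_adj_getVert_of_shortest_odd hw hmin hij hj hvi.symm hvj.symm
  have := gap a b ha.1 hb.1 ha.2 hb.2
  have := gap b a hb.1 ha.1 hb.2 ha.2
  have := gap a c ha.1 hc.1 ha.2 hc.2
  have := gap c a hc.1 ha.1 hc.2 ha.2
  have := gap b c hb.1 hc.1 hb.2 hc.2
  have := gap c b hc.1 hb.1 hc.2 hb.2
  have := Nat.odd_iff.1 hw
  omega

theorem Walk.length_mul_le_of_shortest_odd [Fintype V] [DecidableRel G.Adj] {d : ℕ}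
    (hd : ∀ v, d ≤ G.degree v) (hg : 5 ≤ w.length) : w.length * d ≤ Fintype.card V * 2 := by
  simpa using card_mul_le_card_mul (fun i v => G.Adj (w.getVert i) v)
    (s := range w.length) (t := univ)
    (fun i _ => by simpa [bipartiteAbove, ← neighborFinset_eq_filter] using hd _)
    (fun v _ => w.card_filter_adj_getVert_le_two_of_shortest_odd hw hmin hg v)

theorem Walk.length_eq_three_of_shortest_odd [Fintype V] [DecidableRel G.Adj] {d : ℕ}
    (hd : ∀ v, d ≤ G.degree v) (hdn : 2 * Fintype.card V < 5 * d) : w.length = 3 := by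
  have h1 : w.length ≠ 1 := fun h1 => by
    have := w.adj_getVert_succ (i := 0) (by omega)
    rw [zero_add, ← h1, w.getVert_length, w.getVert_zero] at this
    exact this.ne rfl
  have h5 : ¬ 5 ≤ w.length := fun h5 => by
    have := w.length_mul_le_of_shortest_odd hw hmin hd h5
    nlinarith
  have := Nat.odd_iff.1 hw
  omega

end ShortestOddClosedWalk

def IsCycleMap {m : ℕ} [NeZero m] (G : SimpleGraph V) (c : Fin m → V) : Prop :=
  Function.Injective c ∧ ∀ i, G.Adj (c i) (c (i + 1))

theorem isCycleMap_of_path {L : ℕ} [NeZero L] {p : ℕ → V} (hinj : Set.InjOn p (Set.Iio L))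
    (hadj : ∀ t, t + 1 < L → G.Adj (p t) (p (t + 1))) (hclose : G.Adj (p (L - 1)) (p 0)) :
    G.IsCycleMap (fun i : Fin L => p i) := by
  refine ⟨fun i j h => Fin.ext (hinj i.isLt j.isLt h), fun i => ?_⟩
  have hval : ((i + 1 : Fin L) : ℕ) = (i + 1) % L := by
    rw [Fin.val_add, Fin.val_one', Nat.add_mod_mod]
  show G.Adj (p i) (p (i + 1 : Fin L))
  rw [hval]
  rcases Nat.lt_or_ge (i + 1) L with h | h
  · rw [Nat.mod_eq_of_lt h]
    exact hadj i h
  · have hi : (i : ℕ) = L - 1 := by omega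
    rw [show (i : ℕ) + 1 = L by omega, Nat.mod_self, hi]
    exact hclose

section CycleMap

open Fin.NatCast

variable {m : ℕ} [NeZero m] {c : Fin m → V}

theorem IsCycleMap.one_ne_zero (hc : G.IsCycleMap c) : (1 : Fin m) ≠ 0 := fun h =>
  (hc.2 0).ne (by rw [zero_add, h])

theorem IsCycleMap.rotate (hc : G.IsCycleMap c) (j : Fin m) :
    G.IsCycleMap (fun i => c (i + j)) :=
  ⟨hc.1.comp (add_left_injective j), fun i => by simpa only [add_right_comm] using hc.2 (i + j)⟩

theorem IsCycleMap.update (hc : G.IsCycleMap c) {i : Fin m} {x : V} (hx : ∀ j, c j ≠ x)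
    (h₁ : G.Adj (c (i - 1)) x) (h₂ : G.Adj x (c (i + 1))) :
    G.IsCycleMap (Function.update c i x) := by
  refine ⟨fun a b hab => ?_, fun j => ?_⟩
  · simp only [Function.update_apply] at hab
    split_ifs at hab with ha hb hb
    · exact ha.trans hb.symm
    · exact absurd hab.symm (hx b)
    · exact absurd hab (hx a)
    · exact hc.1 hab
  have h10 := hc.one_ne_zero
  rcases eq_or_ne j i with rfl | hji
  · rw [Function.update_self, Function.update_of_ne (by simpa using h10)]
    exact h₂
  rcases eq_or_ne (j + 1) i with rfl | hj1
  · rw [Function.update_self, Function.update_of_ne hji]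
    rwa [add_sub_cancel_right] at h₁
  · rw [Function.update_of_ne hji, Function.update_of_ne hj1]
    exact hc.2 j

theorem IsCycleMap.exists_add_two (hc : G.IsCycleMap c) {x y : V} (hx : ∀ i, c i ≠ x)
    (hy : ∀ i, c i ≠ y) (h₁ : G.Adj (c (-1)) x) (hxy : G.Adj x y) (h₂ : G.Adj y (c 0)) :
    ∃ c' : Fin (m + 2) → V, G.IsCycleMap c' := by
  have hcast : ∀ s t : ℕ, s < m → t < m → (s : Fin m) = t → s = t := fun s t hs ht h => by
    simpa [Fin.val_cast_of_lt hs, Fin.val_cast_of_lt ht] using congrArg Fin.val h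
  refine ⟨_, isCycleMap_of_path (p := fun t : ℕ => if t < m then c t else if t = m then x else y)
    ?_ ?_ ?_⟩
  · intro s hs t ht hst
    simp only [Set.mem_Iio] at hs ht
    dsimp only at hst
    split_ifs at hst with h1 h2 h3 h4 h5 h6 h7 <;> first
      | exact hcast s t h1 h2 (hc.1 hst) | omega
      | exact absurd hst (hx _) | exact absurd hst.symm (hx _)
      | exact absurd hst (hy _) | exact absurd hst.symm (hy _)
      | exact absurd hst hxy.ne | exact absurd hst.symm hxy.ne
  · intro t ht
    rcases Nat.lt_or_ge (t + 1) m with h | h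
    · rw [if_pos h, if_pos (by omega), Nat.cast_add_one]
      exact hc.2 t
    rcases Nat.lt_or_ge t m with h' | h'
    · have ht : (t : Fin m) = -1 := by
        rw [eq_neg_iff_add_eq_zero, ← Nat.cast_add_one, show t + 1 = m by omega, Fin.natCast_self]
      rw [if_pos h', if_neg (by omega), if_pos (by omega), ht]
      exact h₁
    · rw [if_neg (by omega), if_pos (by omega), if_neg (by omega), if_neg (by omega)]
      exact hxy
  · have hm : 0 < m := Nat.pos_of_neZero m
    simp only [if_neg (show ¬ m + 2 - 1 < m by omega), if_neg (show m + 2 - 1 ≠ m by omega),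
      if_pos hm]
    exact h₂

theorem IsCycleMap.exists_add_two_of_le_degree [Fintype V] [DecidableRel G.Adj]
    (hc : G.IsCycleMap c) (hm : 3 ≤ m) {d : ℕ} (hd : ∀ v, d ≤ G.degree v)
    (hdn : Fintype.card V + 2 * m + 2 ≤ 3 * d) : ∃ c' : Fin (m + 2) → V, G.IsCycleMap c' := by
  classical
  by_contra hno
  let X : Fin m → Finset V := fun j => G.neighborFinset (c j) \ univ.image c
  have mem_X {a : V} {j : Fin m} : a ∈ X j ↔ G.Adj (c j) a ∧ ∀ i, c i ≠ a := by
    simp [X]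
  have card_X (j : Fin m) : d ≤ #(X j) + m := by
    have := card_le_card_sdiff_add_card (s := G.neighborFinset (c j)) (t := univ.image c)
    rw [card_image_of_injective _ hc.1, card_univ, Fintype.card_fin,
      card_neighborFinset_eq_degree] at this
    exact (hd _).trans this
  -- an edge between `X j` and `X (j + 1)` would give an `(m + 2)`-cycle
  have no_edge (j : Fin m) {a b : V} (ha : a ∈ X j) (hb : b ∈ X (j + 1)) : ¬ G.Adj a b :=
    fun hab => hno <| (hc.rotate (j + 1)).exists_add_two (fun i => (mem_X.1 ha).2 _)
      (fun i => (mem_X.1 hb).2 _) (by simpa using (mem_X.1 ha).1) hab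
      (by simpa using (mem_X.1 hb).1.symm)
  have two_le_card_inter (j : Fin m) : 2 ≤ #(X (j - 1) ∩ X (j + 1)) := by
    have hdV := (hd (c 0)).trans_lt (G.degree_lt_card_verts _)
    obtain ⟨a, ha⟩ : (X j).Nonempty := card_pos.1 (by have := card_X j; omega)
    have hdisj : Disjoint (G.neighborFinset a) (X (j - 1) ∪ X (j + 1)) := by
      refine Finset.disjoint_left.2 fun b hab hb => ?_
      rw [mem_neighborFinset] at hab
      rcases mem_union.1 hb with hb | hb
      · exact no_edge (j - 1) hb (by rwa [sub_add_cancel]) hab.symm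
      · exact no_edge j ha hb hab
    -- so `X (j - 1)` and `X (j + 1)` fit into the complement of the neighbourhood of `a`
    have := card_le_univ (G.neighborFinset a ∪ (X (j - 1) ∪ X (j + 1)))
    rw [card_union_of_disjoint hdisj, card_neighborFinset_eq_degree] at this
    have := card_union_add_card_inter (X (j - 1)) (X (j + 1))
    have := hd a
    have := card_X (j - 1)
    have := card_X (j + 1)
    omega
  obtain ⟨a, ha⟩ := card_pos.1 (lt_of_lt_of_le two_pos (two_le_card_inter 0))
  obtain ⟨b, hb, hba⟩ := exists_mem_ne (two_le_card_inter 1) a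
  simp only [mem_inter, mem_X, zero_sub, zero_add, sub_self, one_add_one_eq_two] at ha hb
  have hm1 : (-1 : Fin m) ≠ 1 := by
    rw [Ne, neg_eq_iff_add_eq_zero, ← Nat.cast_one, ← Nat.cast_add, Fin.natCast_eq_zero]
    intro h
    have := Nat.le_of_dvd (by norm_num) h
    omega
  -- replace `c 1` by `b`, then reinsert `c 1` through `a`
  have hc' := hc.update (i := 1) hb.2.2 (by simpa using hb.1.1)
    (by rw [one_add_one_eq_two]; exact hb.2.1.symm)
  refine hno (hc'.exists_add_two (x := a) (y := c 1) ?_ ?_ ?_ ha.2.1.symm ?_)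
  · intro i
    rw [Function.update_apply]
    split_ifs
    exacts [hba, ha.1.2 i]
  · intro i
    rw [Function.update_apply]
    split_ifs with hi
    exacts [(hb.1.2 1).symm, hc.1.ne hi]
  · rw [Function.update_of_ne hm1]
    exact ha.1.1
  · rw [Function.update_of_ne hc.one_ne_zero.symm]
    simpa using (hc.2 0).symm

end CycleMap

theorem Walk.isCycleMap_getVert_of_length_eq_three {u : V} (w : G.Walk u u) (h : w.length = 3) :
    G.IsCycleMap (fun i : Fin 3 => w.getVert i) := by
  have h01 := w.adj_getVert_succ (i := 0) (by omega)
  have h12 := w.adj_getVert_succ (i := 1) (by omega)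
  have h20 : G.Adj (w.getVert 2) (w.getVert 0) := by
    convert w.adj_getVert_succ (i := 2) (by omega) using 1
    rw [show 2 + 1 = w.length by omega, w.getVert_length, w.getVert_zero]
  refine isCycleMap_of_path (fun s hs t ht hst => ?_) (fun t ht => ?_) h20
  · simp only [Set.mem_Iio] at hs ht
    interval_cases s <;> interval_cases t <;> first | rfl | simp_all
  · have ht : t < 2 := by omega
    interval_cases t
    exacts [h01, h12]

theorem IsCycleMap.hasSubCopy {n : ℕ} {c : Fin (n + 2) → V} (hc : G.IsCycleMap c) :
    HasSubCopy (cycleGraph (n + 2)) G := by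
  refine ⟨⟨c, fun {u v} huv => ?_⟩, hc.1⟩
  rcases cycleGraph_adj.1 huv with h | h
  · rw [sub_eq_iff_eq_add'] at h
    exact h ▸ (hc.2 v).symm
  · rw [sub_eq_iff_eq_add'] at h
    exact h ▸ hc.2 u

theorem exists_isCycleMap_of_hasSubCopy {n : ℕ} (h : HasSubCopy (cycleGraph (n + 2)) G) :
    ∃ c : Fin (n + 2) → V, G.IsCycleMap c := by
  obtain ⟨f, hf⟩ := h
  exact ⟨f, hf, fun i => f.map_adj (cycleGraph_adj.2 (Or.inr (add_sub_cancel_left i 1)))⟩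

theorem hasSubCopy_cycleGraph_add_two [Fintype V] [DecidableRel G.Adj] {m : ℕ} (hm : 3 ≤ m)
    (h : HasSubCopy (cycleGraph m) G) {d : ℕ} (hd : ∀ v, d ≤ G.degree v)
    (hdn : Fintype.card V + 2 * m + 2 ≤ 3 * d) : HasSubCopy (cycleGraph (m + 2)) G := by
  obtain ⟨n, rfl⟩ : ∃ n, m = n + 2 := ⟨m - 2, by omega⟩
  obtain ⟨c, hc⟩ := exists_isCycleMap_of_hasSubCopy h
  obtain ⟨c', hc'⟩ := hc.exists_add_two_of_le_degree hm hd hdn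
  exact hc'.hasSubCopy

theorem hasSubCopy_cycleGraph_add_two_mul [Fintype V] [DecidableRel G.Adj] {m : ℕ} (hm : 3 ≤ m)
    (h : HasSubCopy (cycleGraph m) G) {d : ℕ} (hd : ∀ v, d ≤ G.degree v) (j : ℕ)
    (hdn : Fintype.card V + 2 * (m + 2 * j) ≤ 3 * d) : HasSubCopy (cycleGraph (m + 2 * j)) G := by
  induction j with
  | zero => exact h
  | succ j ih =>
    rw [show m + 2 * (j + 1) = m + 2 * j + 2 by ring]
    exact hasSubCopy_cycleGraph_add_two (by omega) (ih (by omega)) hd (by omega)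

end SimpleGraph

theorem stmt_3_general (k : ℕ) (hk : 2 ≤ k) (n : ℕ) (hn : (2 * k) ^ (8 * k ^ 2) ≤ n)
    (α β : ℝ) (hα₂ : α ≤ 1 / 4)
    (hβ₂ : β ≤ α / (2 * k + 1))
    (G : SimpleGraph (Fin n)) (hG : CycleFree (2 * k + 1) G)
    (hδ : ∀ v : Fin n, (1 / 2 - β) * n ≤ ((G.neighborSet v).ncard : ℝ)) :
    _root_.IsBipartite G := by
  classical
  by_contra hbip
  have hkn : 32 * k ≤ n := calc
    32 * k ≤ (2 * k) ^ 3 := by nlinarith [Nat.mul_le_mul hk hk]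
    _ ≤ (2 * k) ^ (8 * k ^ 2) := Nat.pow_le_pow_right (by omega) (by nlinarith)
    _ ≤ n := hn
  have hβ : β ≤ 1 / 20 := hβ₂.trans <| (div_le_iff₀ (by positivity)).2 <| by
    have : (2 : ℝ) ≤ k := by exact_mod_cast hk
    linarith
  have hdeg (v : Fin n) : (9 * n + 19) / 20 ≤ G.degree v := by
    have := hδ v
    rw [← coe_neighborFinset, Set.ncard_coe_finset, card_neighborFinset_eq_degree] at this
    have : (9 * n : ℝ) ≤ 20 * G.degree v := by nlinarith [(n.cast_nonneg : (0 : ℝ) ≤ n)]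
    have : 9 * n ≤ 20 * G.degree v := by exact_mod_cast this
    omega
  obtain ⟨u, w, hw, hmin⟩ :=
    exists_shortest_odd_closed_walk (exists_odd_closed_walk_of_not_isBipartite hbip)
  have h3 := w.length_eq_three_of_shortest_odd hw hmin hdeg (by rw [Fintype.card_fin]; omega)
  have hC3 : HasSubCopy (cycleGraph 3) G :=
    (w.isCycleMap_getVert_of_length_eq_three h3).hasSubCopy
  have := hasSubCopy_cycleGraph_add_two_mul le_rfl hC3 hdeg (k - 1)
    (by rw [Fintype.card_fin]; omega)
  exact hG (by rwa [show 3 + 2 * (k - 1) = 2 * k + 1 by omega] at this)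

theorem stmt_3 (k : ℕ) (hk : 2 ≤ k) (n : ℕ) (hn : (2 * k) ^ (8 * k ^ 2) ≤ n)
    (α β : ℝ) (hα₁ : (2 * (k : ℝ) + 1) / (8 * k + 6) < α) (hα₂ : α ≤ 1 / 4)
    (hβ₁ : 1 / 2 - 2 * α ≤ β) (hβ₂ : β ≤ α / (2 * k + 1))
    (G : SimpleGraph (Fin n)) (hG : CycleFree (2 * k + 1) G)
    (he : α * (n : ℝ) ^ 2 ≤ (G.edgeSet.ncard : ℝ))
    (hδ : ∀ v : Fin n, (1 / 2 - β) * n ≤ ((G.neighborSet v).ncard : ℝ)) :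
    _root_.IsBipartite G :=
  stmt_3_general k hk n hn α β hα₂ hβ₂ G hG hδ
end

section
/- For every integer k ≥ 2, every real α with 0 < α < 1/2, and every integer n ≥ 36k/α, there exists a C_{2k+1}-free graph G on n vertices that belongs to the class 𝒢_{k,α}(n); that is, G is C_{2k+1}-free and V(G) admits a partition into X_1,…,X_t,X_{t+1}, Y_1,…,Y_t,Y_{t+1}, Z_1,…,Z_t (with t = ⌈√(αn/(4k))⌉) satisfying properties (i)–(v) of the class 𝒢_{k,α}(n). -/
open SimpleGraph

/-- `G` belongs to the class `𝒢_{k,α}(n)`: with `t = ⌈√(αn/(4k))⌉`, the vertex set of `G`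
can be partitioned into `X_1, …, X_{t+1}, Y_1, …, Y_{t+1}, Z_1, …, Z_t` satisfying
properties (i)–(v). Here `X, Y : Fin (t+1) → Set (Fin n)` (indices `i` with `(i : ℕ) < t`
play the role of `X_1, …, X_t` and `Fin.last t` that of `X_{t+1}`), `Z : Fin t → Set (Fin n)`,
and `z i` lists the vertices `z^i_1, …, z^i_{2k-1}` of the path through `Z_i`
(0-indexed: `z i 0 = z^i_1`, `z i (2k-2) = z^i_{2k-1}`). -/
def InGClass (k : ℕ) (α : ℝ) (n : ℕ) (G : SimpleGraph (Fin n)) : Prop :=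
  ∃ t : ℕ, t = ⌈Real.sqrt (α * n / (4 * k))⌉₊ ∧
    ∃ (X Y : Fin (t + 1) → Set (Fin n)) (Z : Fin t → Set (Fin n)) (z : Fin t → ℕ → Fin n),
      -- the parts are pairwise disjoint and cover the vertex set
      (∀ i j, i ≠ j → Disjoint (X i) (X j)) ∧
      (∀ i j, i ≠ j → Disjoint (Y i) (Y j)) ∧
      (∀ i j, i ≠ j → Disjoint (Z i) (Z j)) ∧
      (∀ i j, Disjoint (X i) (Y j)) ∧
      (∀ (i : Fin (t + 1)) (j : Fin t), Disjoint (X i) (Z j)) ∧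
      (∀ (i : Fin (t + 1)) (j : Fin t), Disjoint (Y i) (Z j)) ∧
      ((⋃ i, X i) ∪ (⋃ i, Y i) ∪ (⋃ i, Z i) = Set.univ) ∧
      -- (i): `|Z_i| = 2k-1` and `G[Z_i]` contains a path of length `2k-2` through all of `Z_i`
      (∀ i : Fin t, (Z i).ncard = 2 * k - 1 ∧
        (∀ j₁, j₁ < 2 * k - 1 → ∀ j₂, j₂ < 2 * k - 1 → z i j₁ = z i j₂ → j₁ = j₂) ∧
        {v | ∃ j < 2 * k - 1, z i j = v} = Z i ∧
        (∀ j, j + 1 < 2 * k - 1 → G.Adj (z i j) (z i (j + 1)))) ∧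
      -- (ii): sizes of `X_i, Y_i` for `i ≤ t`, and `X_{t+1}, Y_{t+1}` balanced
      (∀ i : Fin (t + 1), (i : ℕ) < t →
        (X i).ncard = ⌊(α * n - (2 * (k : ℝ) - 1) * t) / (2 * t)⌋₊ ∧
        (Y i).ncard = ⌊(α * n - (2 * (k : ℝ) - 1) * t) / (2 * t)⌋₊) ∧
      ((X (Fin.last t)).ncard ≤ (Y (Fin.last t)).ncard + 1 ∧
        (Y (Fin.last t)).ncard ≤ (X (Fin.last t)).ncard + 1) ∧
      -- (iii): the union of the `X_i` and the union of the `Y_i` are independent sets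
      (∀ u ∈ ⋃ i, X i, ∀ v ∈ ⋃ i, X i, ¬ G.Adj u v) ∧
      (∀ u ∈ ⋃ i, Y i, ∀ v ∈ ⋃ i, Y i, ¬ G.Adj u v) ∧
      -- (iv): no edges between `X_i` and `Y_i` for `i ≤ t`; `X_{t+1}`-`Y_{t+1}` complete;
      -- `X_i`-`Y_j` complete for `i ≠ j`
      (∀ i : Fin (t + 1), (i : ℕ) < t → ∀ x ∈ X i, ∀ y ∈ Y i, ¬ G.Adj x y) ∧
      (∀ x ∈ X (Fin.last t), ∀ y ∈ Y (Fin.last t), G.Adj x y) ∧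
      (∀ i j : Fin (t + 1), i ≠ j → ∀ x ∈ X i, ∀ y ∈ Y j, G.Adj x y) ∧
      -- (v): `z^i_1` is joined to all of `X_i` and `z^i_{2k-1}` to all of `Y_i`
      (∀ i : Fin t, (∀ x ∈ X i.castSucc, G.Adj (z i 0) x) ∧
        (∀ y ∈ Y i.castSucc, G.Adj (z i (2 * k - 2)) y))

/-!
The graph is a blow-up of a small pattern graph on the labels `x i`, `y i`, `z i p`: the label
classes `X_i`, `Y_i` have the prescribed sizes and each path vertex `z i p` is a single vertex.
With `L = 2k - 2`, colour `X` with 0, `Y` with 1 and the path vertex `z i p` with the parity of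
`p + 1`, except that the last path vertex `z i L` gets colour 0. This colouring is proper on
every edge except the last path edges `z i (L-1) z i L`. A cycle through such an edge has to run
along the whole path `Z_i`, whose inner vertices have degree 2; a cycle of length
`L + 3 = 2k + 1` then closes up only through an edge between `X_i` and `Y_i`, which does not
exist. So a `C_{2k+1}` would be properly 2-coloured, which is impossible for an odd cycle.
-/

namespace SimpleGraph.cycleGraph

open scoped Fin.NatCast Fin.CommRing

theorem not_colorable_two_of_odd {N : ℕ} (h : 2 ≤ N) (hN : Odd N) :
    ¬ (cycleGraph N).Colorable 2 := fun hc => by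
  have := hc.chromaticNumber_le
  rw [chromaticNumber_cycleGraph_of_odd N h hN] at this
  norm_num at this

def tour {N : ℕ} [NeZero N] (a b : Fin N) (j : ℕ) : Fin N := a + (j : Fin N) * (b - a)

@[simp] lemma tour_zero {N : ℕ} [NeZero N] (a b : Fin N) : tour a b 0 = a := by
  simp [tour]

@[simp] lemma tour_one {N : ℕ} [NeZero N] (a b : Fin N) : tour a b 1 = b := by
  simp [tour]

variable {N : ℕ} {a b : Fin (N + 2)}

lemma sub_eq_one_or_neg_one_of_adj (h : (cycleGraph (N + 2)).Adj a b) :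
    b - a = 1 ∨ b - a = -1 := by
  rcases cycleGraph_adj.mp h with h | h
  · right; rw [← neg_sub, h]
  · left; exact h

lemma adj_tour (h : (cycleGraph (N + 2)).Adj a b) (j : ℕ) :
    (cycleGraph (N + 2)).Adj (tour a b j) (tour a b (j + 1)) := by
  rw [cycleGraph_adj, tour, tour]
  push_cast
  rcases sub_eq_one_or_neg_one_of_adj h with hd | hd <;> rw [hd] <;> ring_nf <;> simp

lemma tour_add_self (j : ℕ) : tour a b (j + (N + 2)) = tour a b j := by
  rw [tour, tour, Nat.cast_add, Fin.natCast_self, add_zero]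

lemma tour_add_two_ne {a b : Fin (N + 3)} (h : (cycleGraph (N + 3)).Adj a b) (j : ℕ) :
    tour a b (j + 2) ≠ tour a b j := by
  intro heq
  have h2 : (2 : Fin (N + 3)) * (b - a) = 0 := by
    simp only [tour] at heq; push_cast at heq; linear_combination heq
  have hd : (b - a) * (b - a) = 1 := by
    rcases sub_eq_one_or_neg_one_of_adj h with hd | hd <;> rw [hd] <;> simp
  have two_eq_zero : (2 : Fin (N + 3)) = 0 := by linear_combination (b - a) * h2 - 2 * hd
  rw [Fin.ext_iff] at two_eq_zero
  simp [Nat.mod_eq_of_lt (show 2 < N + 3 by omega)] at two_eq_zero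

end SimpleGraph.cycleGraph

lemma two_mul_ceil_sqrt_le {k : ℕ} (hk : 0 < k) {a : ℝ} (ha : 4 * k ≤ a) :
    2 * k * (⌈√(a / (4 * k))⌉₊ : ℝ) ≤ a := by
  have hk' : (0 : ℝ) < k := by exact_mod_cast hk
  have h4k : (0 : ℝ) < 4 * k := by positivity
  set s := √(a / (4 * k))
  have hs1 : 1 ≤ s := Real.one_le_sqrt.mpr (by rw [le_div_iff₀ h4k]; linarith)
  have hs2 : s ^ 2 = a / (4 * k) := Real.sq_sqrt (div_nonneg (by linarith) h4k.le)
  have hceil : (⌈s⌉₊ : ℝ) < s + 1 := Nat.ceil_lt_add_one (by positivity)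
  calc 2 * k * (⌈s⌉₊ : ℝ) ≤ 2 * k * (2 * s ^ 2) := by gcongr; nlinarith
    _ = a := by rw [hs2]; field_simp; ring

lemma floor_div_mul_add_le {a c d : ℝ} (hc : c ≤ a) (hd : 0 ≤ d) :
    (⌊(a - c) / d⌋₊ : ℝ) * d + c ≤ a := by
  rcases hd.eq_or_lt with rfl | hd
  · simpa using hc
  have h := Nat.floor_le (div_nonneg (sub_nonneg.mpr hc) hd.le)
  calc (⌊(a - c) / d⌋₊ : ℝ) * d + c ≤ (a - c) / d * d + c := by gcongr
    _ = a := by field_simp; ring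

theorem block_sizes_le {k n : ℕ} (hk : 1 ≤ k) {α : ℝ} (hα : α ≤ 1) (hn : 4 * k ≤ α * n) :
    ⌊(α * n - (2 * (k : ℝ) - 1) * ⌈√(α * n / (4 * k))⌉₊) / (2 * ⌈√(α * n / (4 * k))⌉₊)⌋₊ *
      (2 * ⌈√(α * n / (4 * k))⌉₊) + (2 * k - 1) * ⌈√(α * n / (4 * k))⌉₊ ≤ n := by
  set t := ⌈√(α * n / (4 * k))⌉₊
  have hkt := two_mul_ceil_sqrt_le (by omega) hn
  have hK : ((2 * k - 1 : ℕ) : ℝ) = 2 * k - 1 := by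
    push_cast [Nat.cast_sub (by omega : 1 ≤ 2 * k)]; ring
  have h := floor_div_mul_add_le (a := α * n) (c := (2 * (k : ℝ) - 1) * t) (d := 2 * t)
    (by nlinarith [(Nat.cast_nonneg t : (0 : ℝ) ≤ t)]) (by positivity)
  have hαn : α * n ≤ n := by nlinarith [(Nat.cast_nonneg n : (0 : ℝ) ≤ n), hn]
  have hcast : ((⌊(α * n - (2 * (k : ℝ) - 1) * t) / (2 * t)⌋₊ * (2 * t) + (2 * k - 1) * t : ℕ) : ℝ)
      ≤ n := by
    rw [Nat.cast_add, Nat.cast_mul, Nat.cast_mul (2 * k - 1), hK]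
    push_cast
    linarith
  exact_mod_cast hcast

theorem exists_ncard_fiber_eq {β : Type*} [Fintype β] (w : β → ℕ) {n : ℕ}
    (hn : ∑ b, w b = n) : ∃ ℓ : Fin n → β, ∀ b, (ℓ ⁻¹' {b}).ncard = w b := by
  let e : (Σ b, Fin (w b)) ≃ Fin n := Fintype.equivFinOfCardEq (by simp [hn])
  refine ⟨fun v => (e.symm v).1, fun b => ?_⟩
  have hfib : (fun v => (e.symm v).1) ⁻¹' {b} = e '' Set.range (Sigma.mk b) := by
    rw [e.image_eq_preimage_symm, Set.range_sigmaMk]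
    rfl
  rw [hfib, Set.ncard_image_of_injective _ e.injective,
    Set.ncard_range_of_injective sigma_mk_injective, Nat.card_eq_fintype_card, Fintype.card_fin]

/-- `x i`, `y i` label the parts `X_{i+1}`, `Y_{i+1}`; `z i p` labels the path vertex `z^{i+1}_{p+1}`. -/
inductive PatternVertex (t L : ℕ)
  | x : Fin (t + 1) → PatternVertex t L
  | y : Fin (t + 1) → PatternVertex t L
  | z : Fin t → Fin (L + 1) → PatternVertex t L

namespace PatternVertex

variable {t L : ℕ}

def equivSum : PatternVertex t L ≃ Fin (t + 1) ⊕ Fin (t + 1) ⊕ Fin t × Fin (L + 1) where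
  toFun
    | x i => .inl i
    | y i => .inr (.inl i)
    | z i p => .inr (.inr (i, p))
  invFun
    | .inl i => x i
    | .inr (.inl i) => y i
    | .inr (.inr (i, p)) => z i p
  left_inv a := by cases a <;> rfl
  right_inv s := by rcases s with i | i | ⟨i, p⟩ <;> rfl

instance : Fintype (PatternVertex t L) := Fintype.ofEquiv _ equivSum.symm

def Adj : PatternVertex t L → PatternVertex t L → Prop
  | x i, y j | y j, x i => i = j → i = Fin.last t
  | z i p, z j q => i = j ∧ ((q : ℕ) = p + 1 ∨ (p : ℕ) = q + 1)
  | z i p, x j | x j, z i p => j = i.castSucc ∧ p = 0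
  | z i p, y j | y j, z i p => j = i.castSucc ∧ p = Fin.last L
  | _, _ => False

def weight (m r₁ r₂ : ℕ) : PatternVertex t L → ℕ
  | x i => if (i : ℕ) < t then m else r₁
  | y i => if (i : ℕ) < t then m else r₂
  | z _ _ => 1

lemma sum_weight (m r₁ r₂ : ℕ) :
    ∑ a : PatternVertex t L, a.weight m r₁ r₂ = 2 * (t * m) + t * (L + 1) + r₁ + r₂ := by
  rw [← equivSum.symm.sum_comp]
  simp [Fintype.sum_sum_type, Fin.sum_univ_castSucc, equivSum, weight]
  ring

def color : PatternVertex t L → Fin 2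
  | x _ => 0
  | y _ => 1
  | z _ p => if (p : ℕ) < L ∧ (p : ℕ) % 2 = 0 then 1 else 0

end PatternVertex

open PatternVertex (x y z)

def patternGraph (t L : ℕ) : SimpleGraph (PatternVertex t L) where
  Adj := PatternVertex.Adj
  symm := ⟨fun a b => by cases a <;> cases b <;> simp only [PatternVertex.Adj] <;> grind⟩
  loopless := ⟨fun a => by cases a <;> simp [PatternVertex.Adj]⟩

namespace patternGraph

variable {t L : ℕ}

@[simp] lemma adj_iff {a b : PatternVertex t L} : (patternGraph t L).Adj a b ↔ a.Adj b := Iff.rfl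

lemma adj_z_iff {i : Fin t} {p : Fin (L + 1)} {w : PatternVertex t L} :
    (patternGraph t L).Adj (z i p) w ↔
      (∃ q : Fin (L + 1), w = z i q ∧ ((q : ℕ) = p + 1 ∨ (p : ℕ) = q + 1)) ∨
      (p = 0 ∧ w = x i.castSucc) ∨ (p = Fin.last L ∧ w = y i.castSucc) := by
  cases w <;> simp [PatternVertex.Adj] <;> grind

lemma eq_z_of_adj_of_color_eq (hL : L ≠ 0) {a b : PatternVertex t L}
    (h : (patternGraph t L).Adj a b) (hc : a.color = b.color) :
    ∃ i, ∃ q : Fin (L + 1), (q : ℕ) + 1 = L ∧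
      (a = z i q ∧ b = z i (Fin.last L) ∨ a = z i (Fin.last L) ∧ b = z i q) := by
  cases a <;> cases b <;> simp [PatternVertex.Adj, PatternVertex.color] at h hc ⊢
  case z.z i p j q =>
    obtain ⟨rfl, hpq | hpq⟩ := h <;> split_ifs at hc <;> simp at hc <;> try omega
    · exact ⟨i, p, by omega, Or.inl ⟨⟨rfl, rfl⟩, rfl, Fin.ext (by simp; omega)⟩⟩
    · exact ⟨i, q, by omega, Or.inr ⟨⟨rfl, Fin.ext (by simp; omega)⟩, rfl, rfl⟩⟩
  all_goals obtain ⟨-, rfl⟩ := h; simp at hc <;> omega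

theorem false_of_closed_walk_along_path (s : ℕ → PatternVertex t L)
    (hadj : ∀ j, (patternGraph t L).Adj (s j) (s (j + 1)))
    (hback : ∀ j i p, s j = z i p → s (j + 2) ≠ z i p)
    (hper : ∀ j, s (j + (L + 3)) = s j)
    {i : Fin t} {q : Fin (L + 1)} (h0 : s 0 = z i (Fin.last L)) (h1 : s 1 = z i q)
    (hq : (q : ℕ) + 1 = L) : False := by
  have descent : ∀ j < L, ∃ p q : Fin (L + 1),
      s j = z i p ∧ s (j + 1) = z i q ∧ (p : ℕ) + j = L ∧ (q : ℕ) + 1 = p := by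
    intro j hj
    induction j with
    | zero => exact ⟨_, _, h0, h1, by simp, by simpa using hq⟩
    | succ j ih =>
      obtain ⟨p, q, hp, hq, hpj, hqp⟩ := ih (by omega)
      rcases adj_z_iff.mp (hq ▸ hadj (j + 1)) with ⟨r, hr, hqr | hqr⟩ | ⟨hq0, -⟩ | ⟨hql, -⟩
      · exact (hback j i p hp (hr.trans (congrArg (z i) (Fin.ext (by omega))))).elim
      · exact ⟨q, r, hq, hr, by omega, by omega⟩
      · rw [Fin.ext_iff, Fin.val_zero] at hq0; omega
      · rw [Fin.ext_iff, Fin.val_last] at hql; omega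
  obtain ⟨p, q', hp, hq', hpj, hqp⟩ := descent (L - 1) (by omega)
  rw [show L - 1 + 1 = L by omega] at hq'
  have hx : s (L + 1) = x i.castSucc := by
    rcases adj_z_iff.mp (hq' ▸ hadj L) with ⟨r, hr, hqr | hqr⟩ | ⟨-, hr⟩ | ⟨hql, -⟩
    · have := hback (L - 1) i p hp
      rw [show L - 1 + 2 = L + 1 by omega] at this
      exact (this (hr.trans (congrArg (z i) (Fin.ext (by omega))))).elim
    · omega
    · exact hr
    · rw [Fin.ext_iff, Fin.val_last] at hql; omega
  have hy : s (L + 2) = y i.castSucc := by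
    have h := (hadj (L + 2)).symm
    rw [show L + 2 + 1 = 0 + (L + 3) by omega, hper, h0] at h
    rcases adj_z_iff.mp h with ⟨r, hr, hqr | hqr⟩ | ⟨hl0, -⟩ | ⟨-, hr⟩
    · rw [Fin.val_last] at hqr; omega
    · have := hback (L + 2) i q
      rw [show L + 2 + 2 = 1 + (L + 3) by omega, hper, h1] at this
      rw [Fin.val_last] at hqr
      exact (this (hr.trans (congrArg (z i) (Fin.ext (by omega)))) rfl).elim
    · rw [Fin.ext_iff, Fin.val_last, Fin.val_zero] at hl0; omega
    · exact hr
  have h := hadj (L + 1)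
  rw [hx, hy] at h
  simp [PatternVertex.Adj] at h

end patternGraph

theorem cycleFree_comap_patternGraph {V : Type*} {t L : ℕ} (hL : Even L) (hL0 : L ≠ 0)
    (ℓ : V → PatternVertex t L) (hℓ : ∀ i p, (ℓ ⁻¹' {z i p}).Subsingleton) :
    CycleFree (L + 3) ((patternGraph t L).comap ℓ) := by
  rintro ⟨f, hf⟩
  let g : cycleGraph (L + 3) →g patternGraph t L := ⟨ℓ ∘ f, f.map_rel⟩
  have avoids : ∀ a b, (cycleGraph (L + 3)).Adj a b → ∀ i (q : Fin (L + 1)), (q : ℕ) + 1 = L →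
      g a = z i (Fin.last L) → g b = z i q → False := fun a b hab i q hq ha hb =>
    patternGraph.false_of_closed_walk_along_path (g ∘ cycleGraph.tour a b)
      (fun j => g.map_adj (cycleGraph.adj_tour hab j))
      (fun j i p hj hj2 => cycleGraph.tour_add_two_ne hab j (hf (hℓ i p hj2 hj)))
      (fun j => congrArg g (cycleGraph.tour_add_self j)) (by simpa using ha) (by simpa using hb) hq
  refine cycleGraph.not_colorable_two_of_odd (by omega) (by simpa using hL.add_odd (by decide))
    ⟨Coloring.mk (fun a => (g a).color) fun {a b} hab heq => ?_⟩
  obtain ⟨i, q, hq, ⟨ha, hb⟩ | ⟨ha, hb⟩⟩ :=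
    patternGraph.eq_z_of_adj_of_color_eq hL0 (g.map_adj hab) heq
  · exact avoids b a hab.symm i q hq hb ha
  · exact avoids a b hab i q hq ha hb

section Fibers

variable {V : Type*} {t L : ℕ} {ℓ : V → PatternVertex t L} {zv : Fin t → Fin (L + 1) → V}

lemma apply_eq_z_iff (hzv : ∀ i p, ℓ ⁻¹' {z i p} = {zv i p}) {i p v} :
    ℓ v = z i p ↔ v = zv i p := by
  rw [← Set.mem_singleton_iff (a := v), ← hzv]
  rfl

lemma preimage_range_z (hzv : ∀ i p, ℓ ⁻¹' {z i p} = {zv i p}) (i : Fin t) :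
    ℓ ⁻¹' Set.range (z i) = Set.range (zv i) := by
  ext v
  simp [eq_comm, apply_eq_z_iff hzv]

theorem comap_patternGraph_path (hzv : ∀ i p, ℓ ⁻¹' {z i p} = {zv i p}) (i : Fin t) :
    (ℓ ⁻¹' Set.range (z i)).ncard = L + 1 ∧
    (∀ j₁, j₁ < L + 1 → ∀ j₂, j₂ < L + 1 →
      zv i (Fin.ofNat _ j₁) = zv i (Fin.ofNat _ j₂) → j₁ = j₂) ∧
    {v | ∃ j < L + 1, zv i (Fin.ofNat _ j) = v} = ℓ ⁻¹' Set.range (z i) ∧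
    (∀ j, j + 1 < L + 1 →
      ((patternGraph t L).comap ℓ).Adj (zv i (Fin.ofNat _ j)) (zv i (Fin.ofNat _ (j + 1)))) := by
  have hℓz : ∀ p, ℓ (zv i p) = z i p := fun p => (apply_eq_z_iff hzv).mpr rfl
  have hinj : Function.Injective (zv i) := fun p q h => by simpa [hℓz] using congrArg ℓ h
  refine ⟨?_, fun j₁ h₁ j₂ h₂ h => ?_, ?_, fun j hj => ?_⟩
  · rw [preimage_range_z hzv, Set.ncard_range_of_injective hinj, Nat.card_eq_fintype_card,
      Fintype.card_fin]
  · simpa [Fin.ext_iff, Nat.mod_eq_of_lt h₁, Nat.mod_eq_of_lt h₂] using hinj h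
  · rw [preimage_range_z hzv]
    ext v
    exact ⟨fun ⟨j, _, hj⟩ => ⟨_, hj⟩, fun ⟨p, hp⟩ => ⟨p, p.isLt, by simpa using hp⟩⟩
  · simp [hℓz, PatternVertex.Adj, Nat.mod_eq_of_lt hj, Nat.mod_eq_of_lt (Nat.lt_of_succ_lt hj)]

end Fibers

theorem inGClass_comap_patternGraph {k : ℕ} (hk : 1 ≤ k) {α : ℝ} {n t m r₁ r₂ : ℕ}
    (ht : t = ⌈√(α * n / (4 * k))⌉₊) (hm : m = ⌊(α * n - (2 * (k : ℝ) - 1) * t) / (2 * t)⌋₊)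
    (hr₁ : r₁ ≤ r₂ + 1) (hr₂ : r₂ ≤ r₁ + 1) (ℓ : Fin n → PatternVertex t (2 * k - 2))
    (hℓ : ∀ a, (ℓ ⁻¹' {a}).ncard = a.weight m r₁ r₂) :
    InGClass k α n ((patternGraph t (2 * k - 2)).comap ℓ) := by
  choose zv hzv using fun i p => Set.ncard_eq_one.mp (hℓ (z i p))
  have hℓz : ∀ i p, ℓ (zv i p) = z i p := fun i p => (apply_eq_z_iff hzv).mpr rfl
  refine ⟨t, ht, fun i => ℓ ⁻¹' {x i}, fun i => ℓ ⁻¹' {y i}, fun i => ℓ ⁻¹' Set.range (z i),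
    fun i j => zv i (Fin.ofNat _ j), ?_, ?_, ?_, ?_, ?_, ?_, ?_, ?_, ?_, ?_, ?_, ?_, ?_, ?_, ?_, ?_⟩
  · exact fun i j h => Disjoint.preimage ℓ (by simpa using h)
  · exact fun i j h => Disjoint.preimage ℓ (by simpa using h)
  · exact fun i j h => Disjoint.preimage ℓ (by simp [Set.disjoint_left, h.symm])
  · exact fun i j => Disjoint.preimage ℓ (by simp)
  · exact fun i j => Disjoint.preimage ℓ (by simp)
  · exact fun i j => Disjoint.preimage ℓ (by simp)
  · exact Set.eq_univ_of_forall fun v => by cases h : ℓ v <;> simp [h]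
  · rw [show 2 * k - 1 = 2 * k - 2 + 1 by omega]
    exact comap_patternGraph_path hzv
  · exact fun i hi => by simp [hℓ, PatternVertex.weight, hi, hm]
  · simp [hℓ, PatternVertex.weight]; omega
  · simp only [Set.mem_iUnion, Set.mem_preimage, Set.mem_singleton_iff]
    rintro u ⟨i, hu⟩ v ⟨j, hv⟩
    simp [hu, hv, PatternVertex.Adj]
  · simp only [Set.mem_iUnion, Set.mem_preimage, Set.mem_singleton_iff]
    rintro u ⟨i, hu⟩ v ⟨j, hv⟩
    simp [hu, hv, PatternVertex.Adj]
  · simp only [Set.mem_preimage, Set.mem_singleton_iff]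
    rintro i hi u hu v hv
    simp [hu, hv, PatternVertex.Adj, Fin.ext_iff, hi.ne]
  · simp only [Set.mem_preimage, Set.mem_singleton_iff]
    rintro u hu v hv
    simp [hu, hv, PatternVertex.Adj]
  · simp only [Set.mem_preimage, Set.mem_singleton_iff]
    rintro i j hij u hu v hv
    simp [hu, hv, PatternVertex.Adj, hij]
  · simp only [Set.mem_preimage, Set.mem_singleton_iff]
    exact fun i => ⟨fun u hu => by simp [hu, hℓz, PatternVertex.Adj],
      fun v hv => by simp [hv, hℓz, PatternVertex.Adj]⟩

theorem stmt_4 (k : ℕ) (hk : 2 ≤ k) (α : ℝ) (hα₁ : 0 < α) (hα₂ : α < 1 / 2)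
    (n : ℕ) (hn : 36 * (k : ℝ) / α ≤ n) :
    ∃ G : SimpleGraph (Fin n), CycleFree (2 * k + 1) G ∧ InGClass k α n G := by
  set t := ⌈√(α * n / (4 * k))⌉₊ with ht
  set m := ⌊(α * n - (2 * (k : ℝ) - 1) * t) / (2 * t)⌋₊ with hm
  have hfit : m * (2 * t) + (2 * k - 1) * t ≤ n :=
    block_sizes_le (by omega) (by linarith) (by rw [div_le_iff₀ hα₁] at hn; linarith)
  obtain ⟨r, hr⟩ := Nat.exists_eq_add_of_le hfit
  obtain ⟨ℓ, hℓ⟩ := exists_ncard_fiber_eq (n := n)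
    (PatternVertex.weight (t := t) (L := 2 * k - 2) m (r / 2) (r - r / 2)) (by
      rw [PatternVertex.sum_weight, show 2 * k - 2 + 1 = 2 * k - 1 by omega, hr]
      ring_nf
      omega)
  refine ⟨_, ?_, inGClass_comap_patternGraph (by omega) ht hm (by omega) (by omega) ℓ hℓ⟩
  rw [show 2 * k + 1 = 2 * k - 2 + 3 by omega]
  exact cycleFree_comap_patternGraph ⟨k - 1, by omega⟩ (by omega) ℓ fun i p =>
    Set.ncard_le_one_iff_subsingleton.mp (hℓ (z i p)).le
end

section
/- Let k ≥ 2 be an integer, let α be a real number with 0 < α < 1/2, and let n ≥ 36k/α be an integer. If G is a maximal C_{2k+1}-free graph on n vertices belonging to the class 𝒢_{k,α}(n), then e(G) ≥ n²/4 − 2√(kα)·n^{3/2}, and every induced complete bipartite subgraph of G has at most (1 − α/4)n vertices. -/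
open SimpleGraph

/-- `G` is a maximal `C_m`-free graph. -/
def MaximalCycleFree (m : ℕ) {β : Type*} (G : SimpleGraph β) : Prop :=
  CycleFree m G ∧
    ∀ v w : β, v ≠ w → ¬ G.Adj v w →
      HasSubCopy (cycleGraph m) (G ⊔ fromEdgeSet {s(v, w)})

/-- The induced subgraph of `G` on `S` is a complete bipartite graph. -/
def IsInducedCompleteBipartiteOn {β : Type*} (G : SimpleGraph β) (S : Set β) : Prop :=
  ∃ A B : Set β, Disjoint A B ∧ A ∪ B = S ∧
    ∀ u ∈ S, ∀ v ∈ S, (G.Adj u v ↔ ((u ∈ A ∧ v ∈ B) ∨ (u ∈ B ∧ v ∈ A)))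

/-! Write `r = √(αn/(4k))`, so that `αn = 4kr²`, `t = ⌈r⌉` and `√(kα) n^{3/2} = 2krn`.

Every edge between `X = ⋃ X_i` and `Y = ⋃ Y_i` is present except inside the `t` pairs
`(X_i, Y_i)`, `i ≤ t`, so `e(G) ≥ |X||Y| - t m²` with `m = |X_i|`. As `|X|` and `|Y|` differ by at
most one and together cover all but `t(2k-1)` vertices, this is `n²/4 - O(krn)`.

An induced complete bipartite `S` meeting both `X_i` and `Y_i` for some `i ≤ t` contains two
non-adjacent vertices, which lie on the same side; since `X` and `Y` are independent and `X_j`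
is complete to `Y_i` for `j ≠ i`, `S` then lies in `X_i ∪ Y_i ∪ ⋃ Z_j`, of size about `2αn/3`.
Otherwise `S` misses one of `X_i`, `Y_i` for every `i ≤ t`, that is at least `tm ≥ αn/3`
vertices. -/

open scoped Function

lemma cast_two_mul_sub_one {k : ℕ} (hk : 1 ≤ k) : ((2 * k - 1 : ℕ) : ℝ) = 2 * k - 1 := by
  rw [Nat.cast_sub (by omega)]
  push_cast
  ring

lemma sum_fin_succ_eq_mul_add_last {t m : ℕ} {f : Fin (t + 1) → ℕ}
    (h : ∀ i : Fin t, f i.castSucc = m) : ∑ i, f i = t * m + f (Fin.last t) := by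
  simp [Fin.sum_univ_castSucc, h]

section Combinatorics

variable {V : Type*} {G : SimpleGraph V}

lemma Set.ncard_iUnion_eq_sum {α ι : Type*} [Finite α] [Fintype ι] {s : ι → Set α}
    (h : Pairwise (Disjoint on s)) : (⋃ i, s i).ncard = ∑ i, (s i).ncard := by
  rw [Set.ncard_iUnion_of_finite (fun _ => Set.toFinite _) h, finsum_eq_sum_of_fintype]

lemma Set.ncard_add_sum_ncard_le {α ι : Type*} [Finite α] [Fintype ι] {S : Set α}
    {W : ι → Set α} (hW : Pairwise (Disjoint on W)) (hSW : ∀ i, Disjoint S (W i)) :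
    S.ncard + ∑ i, (W i).ncard ≤ Nat.card α := by
  rw [← Set.ncard_iUnion_eq_sum hW, ← Set.ncard_union_eq (Set.disjoint_iUnion_right.2 hSW)]
  exact Set.ncard_le_card _

lemma SimpleGraph.ncard_adj_prod_le_ncard_edgeSet [Finite V] (G : SimpleGraph V) {A B : Set V}
    (hAB : Disjoint A B) : {p ∈ A ×ˢ B | G.Adj p.1 p.2}.ncard ≤ G.edgeSet.ncard := by
  refine Set.ncard_le_ncard_of_injOn (fun p => s(p.1, p.2)) (fun p hp => hp.2) ?_
  rintro ⟨a, b⟩ ⟨⟨ha, -⟩, -⟩ ⟨a', b'⟩ ⟨⟨-, hb'⟩, -⟩ hab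
  rcases Sym2.eq_iff.1 hab with ⟨rfl, rfl⟩ | ⟨rfl, -⟩
  · rfl
  · exact (hAB.ne_of_mem ha hb' rfl).elim

lemma SimpleGraph.ncard_mul_ncard_le_ncard_edgeSet_add [Finite V] (G : SimpleGraph V)
    {ι : Type*} {A B : Set V} (hAB : Disjoint A B) (s : Finset ι) (X Y : ι → Set V)
    (h : ∀ a ∈ A, ∀ b ∈ B, ¬ G.Adj a b → ∃ i ∈ s, a ∈ X i ∧ b ∈ Y i) :
    A.ncard * B.ncard ≤ G.edgeSet.ncard + ∑ i ∈ s, (X i).ncard * (Y i).ncard := by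
  have hsub : A ×ˢ B ⊆ {p ∈ A ×ˢ B | G.Adj p.1 p.2} ∪ ⋃ i ∈ s, X i ×ˢ Y i := by
    rintro ⟨a, b⟩ ⟨ha, hb⟩
    by_cases hadj : G.Adj a b
    · exact Or.inl ⟨⟨ha, hb⟩, hadj⟩
    · obtain ⟨i, hi, hai, hbi⟩ := h a ha b hb hadj
      exact Or.inr (Set.mem_biUnion hi ⟨hai, hbi⟩)
  calc A.ncard * B.ncard = (A ×ˢ B).ncard := Set.ncard_prod.symm
    _ ≤ _ := Set.ncard_le_ncard hsub
    _ ≤ _ := Set.ncard_union_le _ _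
    _ ≤ _ := by
      gcongr
      · exact G.ncard_adj_prod_le_ncard_edgeSet hAB
      · simpa only [Set.ncard_prod] using s.set_ncard_biUnion_le fun i => X i ×ˢ Y i

lemma IsInducedCompleteBipartiteOn.adj_of_not_adj {S : Set V}
    (hS : IsInducedCompleteBipartiteOn G S) {x y v : V} (hx : x ∈ S) (hy : y ∈ S) (hv : v ∈ S)
    (hxy : ¬ G.Adj x y) (hvy : G.Adj v y) : G.Adj v x := by
  obtain ⟨A, B, hAB, rfl, hadj⟩ := hS
  have := Set.disjoint_left.1 hAB
  rw [hadj v hv y hy] at hvy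
  rw [hadj x hx y hy] at hxy
  rw [hadj v hv x hx]
  rcases hx with hx | hx <;> tauto

lemma IsInducedCompleteBipartiteOn.not_adj_of_isIndepSet {S P : Set V}
    (hS : IsInducedCompleteBipartiteOn G S) (hP : G.IsIndepSet P) {x y v : V}
    (hx : x ∈ S ∩ P) (hy : y ∈ S) (hv : v ∈ S ∩ P) (hxy : ¬ G.Adj x y) : ¬ G.Adj v y :=
  fun hvy => have hvx := hS.adj_of_not_adj hx.1 hy hv.1 hxy hvy
    hP hv.2 hx.2 (G.ne_of_adj hvx) hvx

lemma IsInducedCompleteBipartiteOn.inter_subset_of_not_adj {S : Set V} {ι : Type*}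
    {X Y : ι → Set V} (hS : IsInducedCompleteBipartiteOn G S) (hX : G.IsIndepSet (⋃ j, X j))
    (hY : G.IsIndepSet (⋃ j, Y j)) (hXY : ∀ i j, i ≠ j → ∀ x ∈ X i, ∀ y ∈ Y j, G.Adj x y)
    {i : ι} {x y : V} (hx : x ∈ S ∩ X i) (hy : y ∈ S ∩ Y i) (hxy : ¬ G.Adj x y) :
    S ∩ ((⋃ j, X j) ∪ ⋃ j, Y j) ⊆ X i ∪ Y i := by
  rintro v ⟨hv, hvX | hvY⟩
  · obtain ⟨j, hj⟩ := Set.mem_iUnion.1 hvX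
    obtain rfl : j = i := by_contra fun hji => hS.not_adj_of_isIndepSet hX
      ⟨hx.1, Set.mem_iUnion_of_mem _ hx.2⟩ hy.1 ⟨hv, hvX⟩ hxy (hXY j i hji v hj y hy.2)
    exact Or.inl hj
  · obtain ⟨j, hj⟩ := Set.mem_iUnion.1 hvY
    obtain rfl : j = i := by_contra fun hji => hS.not_adj_of_isIndepSet hY
      ⟨hy.1, Set.mem_iUnion_of_mem _ hy.2⟩ hx.1 ⟨hv, hvY⟩ (fun h => hxy h.symm)
      (hXY i j (Ne.symm hji) x hx.2 v hj).symm
    exact Or.inr hj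

lemma Set.ncard_add_mul_le_of_disjoint_or_disjoint {α ι : Type*} [Finite α] [Fintype ι]
    {S : Set α} {X Y : ι → Set α} {m : ℕ} (hX : Pairwise (Disjoint on X))
    (hY : Pairwise (Disjoint on Y)) (hXY : ∀ i j, Disjoint (X i) (Y j))
    (hXm : ∀ i, (X i).ncard = m) (hYm : ∀ i, (Y i).ncard = m)
    (hS : ∀ i, Disjoint S (X i) ∨ Disjoint S (Y i)) :
    S.ncard + Fintype.card ι * m ≤ Nat.card α := by
  have hW : ∀ i, ∃ W, (W = X i ∨ W = Y i) ∧ Disjoint S W := fun i =>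
    (hS i).elim (fun h => ⟨_, Or.inl rfl, h⟩) (fun h => ⟨_, Or.inr rfl, h⟩)
  choose W hWXY hSW using hW
  have hWdisj : Pairwise (Disjoint on W) := by
    intro i j hij
    rcases hWXY i with hi | hi <;> rcases hWXY j with hj | hj <;>
      simp only [Function.onFun, hi, hj]
    exacts [hX hij, hXY i j, (hXY j i).symm, hY hij]
  have hWm : ∀ i, (W i).ncard = m := fun i => (hWXY i).elim (· ▸ hXm i) (· ▸ hYm i)
  simpa [hWm] using Set.ncard_add_sum_ncard_le hWdisj hSW

end Combinatorics

namespace GClass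

-- The parameters `t` and `|X_i| = |Y_i|` (`i ≤ t`) of the class `𝒢_{k,α}(n)`.
noncomputable def numParts (k : ℕ) (α : ℝ) (n : ℕ) : ℕ := ⌈Real.sqrt (α * n / (4 * k))⌉₊

noncomputable def partSize (k : ℕ) (α : ℝ) (n : ℕ) : ℕ :=
  ⌊(α * n - (2 * (k : ℝ) - 1) * numParts k α n) / (2 * numParts k α n)⌋₊

variable {k : ℕ} {α : ℝ} {n : ℕ}

lemma four_mul_mul_sqrt_sq (hk : 1 ≤ k) (hα : 0 ≤ α) :
    4 * k * Real.sqrt (α * n / (4 * k)) ^ 2 = α * n := by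
  have : (0 : ℝ) < k := by exact_mod_cast hk
  rw [Real.sq_sqrt (by positivity)]
  field_simp

lemma three_le_sqrt (hk : 1 ≤ k) (hn : 36 * (k : ℝ) ≤ α * n) :
    3 ≤ Real.sqrt (α * n / (4 * k)) := by
  have : (0 : ℝ) < k := by exact_mod_cast hk
  rw [Real.le_sqrt' (by norm_num), le_div_iff₀ (by positivity)]
  linarith

lemma sqrt_le_numParts : Real.sqrt (α * n / (4 * k)) ≤ numParts k α n := Nat.le_ceil _

lemma numParts_lt_sqrt_add_one : (numParts k α n : ℝ) < Real.sqrt (α * n / (4 * k)) + 1 :=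
  Nat.ceil_lt_add_one (Real.sqrt_nonneg _)

lemma three_le_numParts (hk : 1 ≤ k) (hn : 36 * (k : ℝ) ≤ α * n) : 3 ≤ (numParts k α n : ℝ) :=
  (three_le_sqrt hk hn).trans sqrt_le_numParts

lemma two_mul_add_one_mul_numParts_le (hk : 1 ≤ k) (hα : 0 < α) (hn : 36 * (k : ℝ) ≤ α * n) :
    (2 * k + 1) * (numParts k α n : ℝ) ≤ α * n / 3 := by
  have hk' : (1 : ℝ) ≤ k := by exact_mod_cast hk
  have h3 := three_le_sqrt hk hn
  have hsq := four_mul_mul_sqrt_sq (n := n) hk hα.le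
  have ht := (numParts_lt_sqrt_add_one (k := k) (α := α) (n := n)).le
  set r := Real.sqrt (α * n / (4 * k))
  nlinarith [mul_le_mul_of_nonneg_left ht (by positivity : (0 : ℝ) ≤ 2 * k + 1)]

lemma partSize_le (hk : 1 ≤ k) (hα : 0 < α) (hn : 36 * (k : ℝ) ≤ α * n) :
    (partSize k α n : ℝ) ≤ α * n / (2 * numParts k α n) := by
  have hk' : (1 : ℝ) ≤ k := by exact_mod_cast hk
  have ht := three_le_numParts hk hn
  have hD := two_mul_add_one_mul_numParts_le hk hα hn
  calc (partSize k α n : ℝ)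
      ≤ (α * n - (2 * (k : ℝ) - 1) * numParts k α n) / (2 * numParts k α n) :=
        Nat.floor_le (div_nonneg (by nlinarith) (by positivity))
    _ ≤ α * n / (2 * numParts k α n) := by gcongr; nlinarith

lemma le_numParts_mul_partSize (hk : 1 ≤ k) (hα : 0 < α) (hn : 36 * (k : ℝ) ≤ α * n) :
    α * n / 3 ≤ numParts k α n * (partSize k α n : ℝ) := by
  have ht := three_le_numParts hk hn
  have hD := two_mul_add_one_mul_numParts_le hk hα hn
  have hm := Nat.lt_floor_add_one
    ((α * n - (2 * (k : ℝ) - 1) * numParts k α n) / (2 * numParts k α n))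
  rw [← partSize, div_lt_iff₀ (by positivity)] at hm
  nlinarith

lemma numParts_mul_partSize_sq_le (hk : 1 ≤ k) (hα : 0 < α) (hn : 36 * (k : ℝ) ≤ α * n) :
    numParts k α n * (partSize k α n : ℝ) ^ 2 ≤ α * k * Real.sqrt (α * n / (4 * k)) * n := by
  have hm := partSize_le hk hα hn
  have ht := three_le_numParts hk hn
  have hrt := sqrt_le_numParts (k := k) (α := α) (n := n)
  have hsq := four_mul_mul_sqrt_sq (n := n) hk hα.le
  have h3 := three_le_sqrt hk hn
  set t : ℝ := (numParts k α n : ℝ)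
  set r := Real.sqrt (α * n / (4 * k))
  calc t * (partSize k α n : ℝ) ^ 2 ≤ t * (α * n / (2 * t)) ^ 2 := by gcongr
    _ = (α * n) ^ 2 / (4 * t) := by field_simp; ring
    _ ≤ (α * n) ^ 2 / (4 * r) := by gcongr
    _ = α * k * r * n := by field_simp; linear_combination (-(n : ℝ)) * hsq

lemma sqrt_mul_mul_rpow_eq (hk : 1 ≤ k) (hα : 0 ≤ α) :
    Real.sqrt (k * α) * (n : ℝ) ^ ((3 : ℝ) / 2) = 2 * k * Real.sqrt (α * n / (4 * k)) * n := by
  have : (0 : ℝ) < k := by exact_mod_cast hk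
  have h32 : (n : ℝ) ^ ((3 : ℝ) / 2) = Real.sqrt n * n := by
    rw [show (3 : ℝ) / 2 = 1 / 2 + 1 by norm_num, Real.rpow_add_of_nonneg (by positivity)
      (by norm_num) (by norm_num), Real.rpow_one, Real.sqrt_eq_rpow]
  rw [h32, ← mul_assoc, ← Real.sqrt_mul (by positivity), show (k : ℝ) * α * n =
    (2 * k) ^ 2 * (α * n / (4 * k)) by field_simp; ring, Real.sqrt_mul (by positivity),
    Real.sqrt_sq (by positivity)]

lemma sq_div_four_sub_le_of_mul_le (hk : 1 ≤ k) (hα : 0 < α) (hα' : α < 1 / 2)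
    (hn : 36 * (k : ℝ) ≤ α * n) {A B e : ℕ} (hAB : A ≤ B + 1) (hBA : B ≤ A + 1)
    (hcover : n ≤ A + B + numParts k α n * (2 * k - 1))
    (he : A * B ≤ e + numParts k α n * partSize k α n ^ 2) :
    (n : ℝ) ^ 2 / 4 - 2 * Real.sqrt (k * α) * (n : ℝ) ^ ((3 : ℝ) / 2) ≤ e := by
  have hk' : (1 : ℝ) ≤ k := by exact_mod_cast hk
  have hn0 : (0 : ℝ) < n := by nlinarith
  have hr := three_le_sqrt hk hn
  have hD := two_mul_add_one_mul_numParts_le hk hα hn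
  have htr := (numParts_lt_sqrt_add_one (k := k) (α := α) (n := n)).le
  have htm := numParts_mul_partSize_sq_le hk hα hn
  have hAB' : (A : ℝ) ≤ B + 1 := by exact_mod_cast hAB
  have hBA' : (B : ℝ) ≤ A + 1 := by exact_mod_cast hBA
  have hcover' : (n : ℝ) ≤ A + B + numParts k α n * (2 * k - 1) := by
    rw [← cast_two_mul_sub_one hk]; exact_mod_cast hcover
  have he' : (A : ℝ) * B ≤ e + numParts k α n * (partSize k α n : ℝ) ^ 2 := by
    exact_mod_cast he
  rw [mul_assoc, sqrt_mul_mul_rpow_eq hk hα.le]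
  set t : ℝ := (numParts k α n : ℝ)
  set r := Real.sqrt (α * n / (4 * k))
  have ht0 : 0 ≤ t := by positivity
  have hαn : α * n ≤ n := by nlinarith
  have hsum : 0 ≤ n - (2 * k - 1) * t := by nlinarith
  have hprod : (n - (2 * k - 1) * t) ^ 2 - 1 ≤ 4 * (A * B) := by nlinarith
  have hkrn : 0 ≤ k * r * n := by positivity
  have hnD : n * ((2 * k - 1) * t) ≤ 2 * (k * r * n) + 2 * k * n := by
    have hkn : 0 ≤ (2 * k - 1) * (n : ℝ) := by nlinarith
    nlinarith [mul_le_mul_of_nonneg_left htr hkn]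
  have hαkrn : α * k * r * n ≤ k * r * n / 2 := by nlinarith
  have hkn : k * n ≤ k * r * n / 3 := by
    nlinarith [mul_nonneg (by positivity : (0 : ℝ) ≤ k * n) (sub_nonneg.2 hr)]
  have hone : 1 ≤ k * r * n := by nlinarith
  nlinarith [sq_nonneg ((2 * k - 1) * t)]

lemma le_one_sub_mul_of_le_or_add_le (hk : 1 ≤ k) (hα : 0 < α) (hα' : α < 1 / 2)
    (hn : 36 * (k : ℝ) ≤ α * n) {s : ℕ}
    (hs : s ≤ 2 * partSize k α n + numParts k α n * (2 * k - 1) ∨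
      s + numParts k α n * partSize k α n ≤ n) :
    (s : ℝ) ≤ (1 - α / 4) * n := by
  have hk' : (1 : ℝ) ≤ k := by exact_mod_cast hk
  have ht := three_le_numParts hk hn
  have hD := two_mul_add_one_mul_numParts_le hk hα hn
  rcases hs with hs | hs
  · have hs' : (s : ℝ) ≤ 2 * partSize k α n + numParts k α n * (2 * k - 1) := by
      rw [← cast_two_mul_sub_one hk]; exact_mod_cast hs
    have hm := partSize_le hk hα hn
    have h2m : 2 * (partSize k α n : ℝ) ≤ α * n / 3 := by
      calc 2 * (partSize k α n : ℝ) ≤ α * n / numParts k α n := by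
            rw [mul_comm 2 (numParts k α n : ℝ), ← div_div] at hm; linarith
        _ ≤ α * n / 3 := by gcongr
    nlinarith
  · have hs' : (s : ℝ) + numParts k α n * partSize k α n ≤ n := by exact_mod_cast hs
    nlinarith [le_numParts_mul_partSize hk hα hn]

end GClass

namespace InGClass

open GClass

variable {k : ℕ} {α : ℝ} {n : ℕ} {G : SimpleGraph (Fin n)}

lemma exists_ncard_mul_ncard_le (h : InGClass k α n G) :
    ∃ A B : ℕ, A ≤ B + 1 ∧ B ≤ A + 1 ∧ n ≤ A + B + numParts k α n * (2 * k - 1) ∧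
      A * B ≤ G.edgeSet.ncard + numParts k α n * partSize k α n ^ 2 := by
  obtain ⟨t, ht, X, Y, Z, z, hXX, hYY, -, hXY, -, -, hcover, hZ, hsize, hbal, -, -, -, hlast,
    hXYij, -⟩ := h
  obtain rfl : numParts k α n = t := ht.symm
  have hm : ∀ i : Fin (numParts k α n),
      (X i.castSucc).ncard = partSize k α n ∧ (Y i.castSucc).ncard = partSize k α n :=
    fun i => hsize _ (by simp)
  have hA : (⋃ i, X i).ncard = numParts k α n * partSize k α n + (X (Fin.last _)).ncard := by
    rw [Set.ncard_iUnion_eq_sum hXX]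
    exact sum_fin_succ_eq_mul_add_last fun i => (hm i).1
  have hB : (⋃ i, Y i).ncard = numParts k α n * partSize k α n + (Y (Fin.last _)).ncard := by
    rw [Set.ncard_iUnion_eq_sum hYY]
    exact sum_fin_succ_eq_mul_add_last fun i => (hm i).2
  refine ⟨(⋃ i, X i).ncard, (⋃ i, Y i).ncard, by omega, by omega, ?_, ?_⟩
  · calc n = ((⋃ i, X i) ∪ (⋃ i, Y i) ∪ ⋃ i, Z i).ncard := by simp [hcover]
      _ ≤ ((⋃ i, X i) ∪ (⋃ i, Y i)).ncard + (⋃ i, Z i).ncard := Set.ncard_union_le _ _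
      _ ≤ (⋃ i, X i).ncard + (⋃ i, Y i).ncard + ∑ i, (Z i).ncard :=
        add_le_add (Set.ncard_union_le _ _) (Set.ncard_iUnion_le_of_fintype Z)
      _ = _ := by simp [fun i => (hZ i).1]
  · have hAB : Disjoint (⋃ i, X i) (⋃ i, Y i) :=
      Set.disjoint_iUnion_left.2 fun i => Set.disjoint_iUnion_right.2 (hXY i)
    calc _ ≤ G.edgeSet.ncard + ∑ i : Fin (numParts k α n),
          (X i.castSucc).ncard * (Y i.castSucc).ncard := by
          refine G.ncard_mul_ncard_le_ncard_edgeSet_add hAB _ _ _ ?_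
          simp only [Set.mem_iUnion, Finset.mem_univ, true_and]
          rintro a ⟨i, ha⟩ b ⟨j, hb⟩ hab
          obtain rfl : i = j := by_contra fun hij => hab (hXYij i j hij a ha b hb)
          obtain ⟨i, rfl⟩ : ∃ i', Fin.castSucc i' = i :=
            Fin.exists_castSucc_eq.2 fun hi => hab (hlast a (hi ▸ ha) b (hi ▸ hb))
          exact ⟨i, ha, hb⟩
      _ = _ := by simp [hm, sq]

lemma ncard_le_or_add_le (h : InGClass k α n G) {S : Set (Fin n)}
    (hS : IsInducedCompleteBipartiteOn G S) :
    S.ncard ≤ 2 * partSize k α n + numParts k α n * (2 * k - 1) ∨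
      S.ncard + numParts k α n * partSize k α n ≤ n := by
  obtain ⟨t, ht, X, Y, Z, z, hXX, hYY, -, hXY, -, -, hcover, hZ, hsize, -, hXind, hYind, hXYi, -,
    hXYij, -⟩ := h
  obtain rfl : numParts k α n = t := ht.symm
  have hm : ∀ i : Fin (numParts k α n),
      (X i.castSucc).ncard = partSize k α n ∧ (Y i.castSucc).ncard = partSize k α n :=
    fun i => hsize _ (by simp)
  by_cases hmeet : ∃ i : Fin (numParts k α n),
      (S ∩ X i.castSucc).Nonempty ∧ (S ∩ Y i.castSucc).Nonempty
  · left
    obtain ⟨i, ⟨x, hx⟩, ⟨y, hy⟩⟩ := hmeet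
    have hsub : S ⊆ X i.castSucc ∪ Y i.castSucc ∪ ⋃ j, Z j := by
      intro v hv
      rcases (hcover ▸ Set.mem_univ v : v ∈ _) with hvXY | hvZ
      · refine Or.inl (hS.inter_subset_of_not_adj (fun u hu w hw _ => hXind u hu w hw)
          (fun u hu w hw _ => hYind u hu w hw) hXYij hx hy ?_ ⟨hv, hvXY⟩)
        exact hXYi _ (by simp) x hx.2 y hy.2
      · exact Or.inr hvZ
    calc S.ncard ≤ (X i.castSucc ∪ Y i.castSucc ∪ ⋃ j, Z j).ncard := Set.ncard_le_ncard hsub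
      _ ≤ (X i.castSucc).ncard + (Y i.castSucc).ncard + ∑ j, (Z j).ncard := by
        grw [Set.ncard_union_le, Set.ncard_union_le, Set.ncard_iUnion_le_of_fintype]
      _ = _ := by simp [hm, fun j => (hZ j).1]; ring
  · right
    push Not at hmeet
    simpa using Set.ncard_add_mul_le_of_disjoint_or_disjoint (S := S)
      (X := fun i : Fin (numParts k α n) => X i.castSucc) (Y := fun i => Y i.castSucc)
      (fun i j hij => hXX _ _ ((Fin.castSucc_injective _).ne hij))
      (fun i j hij => hYY _ _ ((Fin.castSucc_injective _).ne hij)) (fun i j => hXY _ _)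
      (fun i => (hm i).1) (fun i => (hm i).2) fun i => by
        by_cases hi : (S ∩ X i.castSucc).Nonempty
        · exact Or.inr (Set.disjoint_iff_inter_eq_empty.2 (hmeet i hi))
        · exact Or.inl (Set.disjoint_iff_inter_eq_empty.2 (Set.not_nonempty_iff_eq_empty.1 hi))

end InGClass

theorem stmt_5_general (k : ℕ) (hk : 2 ≤ k) (α : ℝ) (hα₁ : 0 < α) (hα₂ : α < 1 / 2)
    (n : ℕ) (hn : 36 * (k : ℝ) / α ≤ n) (G : SimpleGraph (Fin n))
    (hclass : InGClass k α n G) :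
    (n : ℝ) ^ 2 / 4 - 2 * Real.sqrt (k * α) * (n : ℝ) ^ ((3 : ℝ) / 2) ≤
      (G.edgeSet.ncard : ℝ) ∧
    ∀ S : Set (Fin n), IsInducedCompleteBipartiteOn G S →
      (S.ncard : ℝ) ≤ (1 - α / 4) * n := by
  have hk₁ : 1 ≤ k := by omega
  have hn' : 36 * (k : ℝ) ≤ α * n := by rw [div_le_iff₀ hα₁] at hn; linarith
  refine ⟨?_, fun S hS =>
    GClass.le_one_sub_mul_of_le_or_add_le hk₁ hα₁ hα₂ hn' (hclass.ncard_le_or_add_le hS)⟩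
  obtain ⟨A, B, hAB, hBA, hcover, he⟩ := hclass.exists_ncard_mul_ncard_le
  exact GClass.sq_div_four_sub_le_of_mul_le hk₁ hα₁ hα₂ hn' hAB hBA hcover he

theorem stmt_5 (k : ℕ) (hk : 2 ≤ k) (α : ℝ) (hα₁ : 0 < α) (hα₂ : α < 1 / 2)
    (n : ℕ) (hn : 36 * (k : ℝ) / α ≤ n) (G : SimpleGraph (Fin n))
    (hmax : MaximalCycleFree (2 * k + 1) G) (hclass : InGClass k α n G) :
    (n : ℝ) ^ 2 / 4 - 2 * Real.sqrt (k * α) * (n : ℝ) ^ ((3 : ℝ) / 2) ≤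
      (G.edgeSet.ncard : ℝ) ∧
    ∀ S : Set (Fin n), IsInducedCompleteBipartiteOn G S →
      (S.ncard : ℝ) ≤ (1 - α / 4) * n :=
  stmt_5_general k hk α hα₁ hα₂ n hn G hclass
end

section
/- Let k ≥ 2 and n ≥ 16k be integers. Let G be a maximal C_{2k+1}-free graph on n vertices and let T ⊆ V(G) be such that G − T is bipartite with parts X and Y and has minimum degree at least (1/2 − 1/(16k))n. Then for every pair of non-adjacent vertices x ∈ X and y ∈ Y, there is a path x, x', u_1, …, u_{2k−3}, y', y of length 2k in G from x to y such that both x' and y' lie in T. -/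
open SimpleGraph

/-!
Adding the non-edge `xy` to a maximal `C_{2k+1}`-free graph creates a `C_{2k+1}` through `xy`,
so `G` has a path `x = u₀, u₁, …, u_{2k} = y`. If `u₁ ∉ T`, then `u₁ ∈ Y` because `X` is
independent. Counting the neighbours of `x`, which lie in `Y`, gives `|X| ≤ n - δ`, so the two
vertices `u₁, y ∈ Y` have at least `3δ - n > 2k + 1` common neighbours in `X`. One of them, `z`,
is off the path, and `u₁ … u_{2k} z u₁` is a `C_{2k+1}` in `G`. For `u_{2k-1}`, run the same
argument on the reversed path.
-/

namespace SimpleGraph.Walk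

variable {V : Type*} {G : SimpleGraph V} {u v w : V}

lemma IsPath.isCycle_cons {p : G.Walk u v} (hp : p.IsPath) (h : G.Adj v u) (hl : 2 ≤ p.length) :
    (cons h p).IsCycle := by
  refine Path.cons_isCycle ⟨p, hp⟩ h fun he => ?_
  have := hp.length_eq_one_of_mem_edges (Sym2.eq_swap ▸ he)
  omega

lemma IsCycle.snd_eq_or_penultimate_eq_of_mem_edges {c : G.Walk u u} (hc : c.IsCycle)
    (h : s(u, w) ∈ c.edges) : c.snd = w ∨ c.penultimate = w := by
  rw [← c.cons_tail_eq hc.not_nil, edges_cons, List.mem_cons] at h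
  rcases h with h | h
  · exact Or.inl (Sym2.congr_right.mp h).symm
  · have hlen := hc.three_le_length
    right
    rw [hc.isPath_tail.eq_penultimate_of_mem_edges h]
    simp only [penultimate, getVert_tail, length_tail]
    congr 1
    omega

lemma IsCycle.exists_isPath_of_mem_edges {c : G.Walk u u} (hc : c.IsCycle)
    (h : s(u, w) ∈ c.edges) :
    ∃ p : G.Walk u w, p.IsPath ∧ p.length + 1 = c.length ∧ s(u, w) ∉ p.edges := by
  wlog hsnd : c.snd = w generalizing c
  · have hrev : c.reverse.snd = w := by
      simpa [hsnd] using hc.snd_eq_or_penultimate_eq_of_mem_edges h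
    obtain ⟨p, hp, hl, he⟩ := this hc.reverse (by simpa using h) hrev
    exact ⟨p, hp, by simpa using hl, he⟩
  subst hsnd
  have hlen := hc.three_le_length
  refine ⟨c.tail.reverse, hc.isPath_tail.reverse, ?_, ?_⟩
  · rw [length_reverse, length_tail]
    omega
  · have hnodup := hc.edges_nodup
    rw [← c.cons_tail_eq hc.not_nil, edges_cons, List.nodup_cons] at hnodup
    simpa using hnodup.1

end SimpleGraph.Walk

namespace SimpleGraph

variable {V : Type*} {G : SimpleGraph V} {x y : V}

lemma hasSubCopy_iff_isContained {W : Type*} {H : SimpleGraph W} : HasSubCopy H G ↔ H ⊑ G :=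
  ⟨fun ⟨f, hf⟩ => ⟨⟨f, hf⟩⟩, fun ⟨f⟩ => ⟨f.toHom, f.injective⟩⟩

lemma hasSubCopy_cycleGraph_iff {m : ℕ} (hm : 2 < m) :
    HasSubCopy (cycleGraph m) G ↔ ∃ (v : V) (c : G.Walk v v), c.IsCycle ∧ c.length = m :=
  hasSubCopy_iff_isContained.trans (cycleGraph_isContained_iff hm)

lemma CycleFree.not_adj_of_isPath {m : ℕ} (hG : CycleFree m G) {p : G.Walk x y} (hp : p.IsPath)
    (hl : p.length + 1 = m) (h2 : 2 ≤ p.length) : ¬ G.Adj y x := fun h =>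
  hG <| (hasSubCopy_cycleGraph_iff (by omega)).2 ⟨y, .cons h p, hp.isCycle_cons h h2, by simp [hl]⟩

lemma mem_edgeSet_of_mem_edgeSet_sup_edge {e : Sym2 V}
    (he : e ∈ (G ⊔ fromEdgeSet {s(x, y)}).edgeSet) (hne : e ≠ s(x, y)) : e ∈ G.edgeSet := by
  simp only [edgeSet_sup, edgeSet_fromEdgeSet, Set.mem_union, Set.mem_sdiff,
    Set.mem_singleton_iff] at he
  tauto

lemma CycleFree.exists_isPath_of_hasSubCopy_sup_edge {m : ℕ} (hG : CycleFree m G) (hm : 2 < m)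
    (h : HasSubCopy (cycleGraph m) (G ⊔ fromEdgeSet {s(x, y)})) :
    ∃ p : G.Walk x y, p.IsPath ∧ p.length + 1 = m := by
  classical
  obtain ⟨v, c, hc, hlen⟩ := (hasSubCopy_cycleGraph_iff hm).1 h
  by_cases hxy : s(x, y) ∈ c.edges
  · have hx : x ∈ c.support := c.fst_mem_support_of_mem_edges hxy
    obtain ⟨p, hp, hpl, hpe⟩ :=
      (hc.rotate hx).exists_isPath_of_mem_edges ((c.rotate_edges x hx).mem_iff.2 hxy)
    refine ⟨p.transfer G fun e he => mem_edgeSet_of_mem_edgeSet_sup_edge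
      (p.edges_subset_edgeSet he) (ne_of_mem_of_not_mem he hpe), hp.transfer _, ?_⟩
    simpa [hlen] using hpl
  · refine absurd ((hasSubCopy_cycleGraph_iff hm).2 ⟨v, c.transfer G fun e he => ?_,
      hc.transfer _, by simpa using hlen⟩) hG
    exact mem_edgeSet_of_mem_edgeSet_sup_edge (c.edges_subset_edgeSet he)
      (ne_of_mem_of_not_mem he hxy)

lemma MaximalCycleFree.exists_isPath {m : ℕ} (hG : MaximalCycleFree m G) (hm : 2 < m)
    (hne : x ≠ y) (hadj : ¬ G.Adj x y) : ∃ p : G.Walk x y, p.IsPath ∧ p.length + 1 = m :=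
  hG.1.exists_isPath_of_hasSubCopy_sup_edge hm (hG.2 x y hne hadj)

section Bipartite

variable {X Y : Set V}

lemma neighborSet_inter_union_subset_of_mem (hY : ∀ u ∈ Y, ∀ v ∈ Y, ¬ G.Adj u v) {a : V}
    (ha : a ∈ Y) : G.neighborSet a ∩ (X ∪ Y) ⊆ X := by
  rintro z ⟨hz, hzX | hzY⟩
  · exact hzX
  · exact (hY a ha z hzY hz).elim

lemma exists_common_neighbor_notMem [Finite V] (hXY : Disjoint X Y)
    (hX : ∀ u ∈ X, ∀ v ∈ X, ¬ G.Adj u v) (hY : ∀ u ∈ Y, ∀ v ∈ Y, ¬ G.Adj u v) {δ : ℝ}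
    (hdeg : ∀ v ∈ X ∪ Y, δ ≤ (G.neighborSet v ∩ (X ∪ Y)).ncard) {w a b : V}
    (hw : w ∈ X) (ha : a ∈ Y) (hb : b ∈ Y) {S : Finset V} (hS : Nat.card V + S.card < 3 * δ) :
    ∃ z ∉ S, G.Adj a z ∧ G.Adj b z := by
  set A := G.neighborSet a ∩ (X ∪ Y)
  set B := G.neighborSet b ∩ (X ∪ Y)
  set C := G.neighborSet w ∩ (X ∪ Y)
  have hC : C ⊆ Y := by
    simpa only [C, Set.union_comm X Y] using neighborSet_inter_union_subset_of_mem (X := Y) hX hw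
  have hXC : X.ncard + C.ncard ≤ Nat.card V :=
    Set.ncard_union_eq (hXY.mono_right hC) ▸ Set.ncard_le_card _
  have hAB : A.ncard + B.ncard ≤ X.ncard + (A ∩ B).ncard := by
    rw [← Set.ncard_union_add_ncard_inter]
    have := Set.ncard_le_ncard (s := A ∪ B) (t := X) (Set.union_subset
      (neighborSet_inter_union_subset_of_mem hY ha) (neighborSet_inter_union_subset_of_mem hY hb))
    omega
  have hSAB : S.card < (A ∩ B).ncard := by
    have := hdeg a (.inr ha); have := hdeg b (.inr hb); have := hdeg w (.inl hw)
    have : (A.ncard + B.ncard : ℝ) ≤ X.ncard + (A ∩ B).ncard := by exact_mod_cast hAB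
    have : (X.ncard + C.ncard : ℝ) ≤ Nat.card V := by exact_mod_cast hXC
    exact_mod_cast (by linarith : (S.card : ℝ) < (A ∩ B).ncard)
  obtain ⟨z, ⟨⟨haz, -⟩, hbz, -⟩, hzS⟩ := Set.not_subset.1 fun hsub : A ∩ B ⊆ S =>
    (Set.ncard_le_ncard hsub).not_gt (Set.ncard_coe_finset S ▸ hSAB)
  exact ⟨z, hzS, haz, hbz⟩

lemma snd_notMem_of_isPath [Finite V] (hXY : Disjoint X Y)
    (hX : ∀ u ∈ X, ∀ v ∈ X, ¬ G.Adj u v) (hY : ∀ u ∈ Y, ∀ v ∈ Y, ¬ G.Adj u v) {δ : ℝ}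
    (hdeg : ∀ v ∈ X ∪ Y, δ ≤ (G.neighborSet v ∩ (X ∪ Y)).ncard) {p : G.Walk x y}
    (hp : p.IsPath) (hG : CycleFree (p.length + 1) G) (h2 : 2 ≤ p.length) (hx : x ∈ X)
    (hy : y ∈ Y) (hδ : Nat.card V + (p.length + 1) < 3 * δ) : p.snd ∉ X ∪ Y := by
  classical
  intro hsnd
  have hnil : ¬ p.Nil := by rw [← Walk.length_eq_zero_iff]; omega
  have hsndY : p.snd ∈ Y := hsnd.resolve_left fun h => hX x hx _ h (p.adj_snd hnil)
  have hS : (p.support.toFinset.card : ℝ) ≤ p.length + 1 := by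
    exact_mod_cast p.length_support ▸ p.support.toFinset_card_le
  obtain ⟨z, hz, hsz, hyz⟩ :=
    exists_common_neighbor_notMem hXY hX hY hdeg hx hsndY hy (by linarith)
  have hzt : z ∉ p.tail.support := fun h => hz <| List.mem_toFinset.2 <|
    List.mem_of_mem_tail (p.support_tail_of_not_nil hnil ▸ h)
  refine hG.not_adj_of_isPath (hp.tail.concat hzt hyz) ?_ ?_ hsz.symm <;>
    simp only [Walk.length_concat, Walk.length_tail] <;> omega

end Bipartite

end SimpleGraph

lemma add_lt_three_mul_degree_bound {k n : ℕ} (hk : 2 ≤ k) (hn : 16 * k ≤ n) :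
    (n : ℝ) + (2 * k + 1) < 3 * ((1 / 2 - 1 / (16 * (k : ℝ))) * n) := by
  have hk' : (2 : ℝ) ≤ k := by exact_mod_cast hk
  have hn' : 16 * (k : ℝ) ≤ n := by exact_mod_cast hn
  rw [← sub_pos]
  field_simp
  nlinarith

theorem stmt_6 (k : ℕ) (hk : 2 ≤ k) (n : ℕ) (hn : 16 * k ≤ n)
    (G : SimpleGraph (Fin n)) (hG : MaximalCycleFree (2 * k + 1) G)
    (T X Y : Set (Fin n))
    -- `G - T` is bipartite with parts `X` and `Y`
    (hXY : Disjoint X Y) (hpart : X ∪ Y = Tᶜ)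
    (hXind : ∀ u ∈ X, ∀ v ∈ X, ¬ G.Adj u v)
    (hYind : ∀ u ∈ Y, ∀ v ∈ Y, ¬ G.Adj u v)
    -- `G - T` has minimum degree at least `(1/2 - 1/(16k)) n`
    (hdeg : ∀ v ∈ X ∪ Y,
      (1 / 2 - 1 / (16 * (k : ℝ))) * n ≤ ((G.neighborSet v ∩ (X ∪ Y)).ncard : ℝ)) :
    ∀ x ∈ X, ∀ y ∈ Y, ¬ G.Adj x y →
      ∃ p : G.Walk x y, p.IsPath ∧ p.length = 2 * k ∧
        p.getVert 1 ∈ T ∧ p.getVert (2 * k - 1) ∈ T := by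
  intro x hx y hy hxy
  obtain ⟨p, hp, hlen⟩ := hG.exists_isPath (by omega) (hXY.ne_of_mem hx hy) hxy
  have hl : p.length = 2 * k := by omega
  have hfree : CycleFree (p.length + 1) G := hlen ▸ hG.1
  have hδ : Nat.card (Fin n) + (p.length + 1 : ℝ) < 3 * ((1 / 2 - 1 / (16 * (k : ℝ))) * n) := by
    simpa [hl] using add_lt_three_mul_degree_bound hk hn
  refine ⟨p, hp, hl, ?_, ?_⟩
  · have := snd_notMem_of_isPath hXY hXind hYind hdeg hp hfree (by omega) hx hy hδ
    rwa [hpart, Set.notMem_compl_iff] at this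
  · have := snd_notMem_of_isPath hXY.symm hYind hXind (Set.union_comm X Y ▸ hdeg) hp.reverse
      (by simpa using hfree) (by rw [Walk.length_reverse]; omega) hy hx (by simpa using hδ)
    rw [Walk.snd_reverse, Set.union_comm, hpart, Set.notMem_compl_iff] at this
    rwa [Walk.penultimate, hl] at this
end

section
/- Let k ≥ 2 be an integer and let G be a C_{2k+1}-free graph containing a cycle C = v_1 v_2 … v_{2k} v_1 of length 2k. Then the set S_odd = {u ∈ V(G) \ {v_1,…,v_{2k}} : u is adjacent to v_{2i−1} for every i = 1,…,k} is an independent set in G; likewise, the set S_even = {u ∈ V(G) \ {v_1,…,v_{2k}} : u is adjacent to v_{2i} for every i = 1,…,k} is an independent set in G. -/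
/-!
If two adjacent vertices `x, y` outside an `n`-cycle `v` are joined to `v s` and `v (s + 2)`
respectively, the detour `v s, x, y, v (s + 2)` replaces the path `v s, v (s + 1), v (s + 2)`
and yields a cycle of length `n + 1`. Two adjacent vertices of `S_odd` (resp. `S_even`) give such
a detour with `s = 0` (resp. `s = 1`), and `k ≥ 2` makes `s + 2 < 2k`.
-/

open SimpleGraph

namespace SimpleGraph

variable {V : Type*} {G : SimpleGraph V}

def IsPathSeq (G : SimpleGraph V) (m : ℕ) (w : ℕ → V) : Prop :=
  (∀ i ≤ m, ∀ j ≤ m, w i = w j → i = j) ∧ ∀ i < m, G.Adj (w i) (w (i + 1))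

theorem IsPathSeq.snoc {m : ℕ} {w : ℕ → V} {x : V} (hw : G.IsPathSeq m w)
    (hx : ∀ i ≤ m, w i ≠ x) (hadj : G.Adj (w m) x) :
    G.IsPathSeq (m + 1) (Function.update w (m + 1) x) := by
  have hval : ∀ i ≤ m, Function.update w (m + 1) x i = w i := fun i hi =>
    Function.update_of_ne (by omega) _ _
  constructor
  · intro i hi j hj hij
    rcases hi.lt_or_eq with hi | rfl <;> rcases hj.lt_or_eq with hj | rfl
    · rw [hval i (by omega), hval j (by omega)] at hij
      exact hw.1 i (by omega) j (by omega) hij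
    · rw [hval i (by omega), Function.update_self] at hij
      exact absurd hij (hx i (by omega))
    · rw [hval j (by omega), Function.update_self] at hij
      exact absurd hij.symm (hx j (by omega))
    · rfl
  · intro i hi
    rcases (Nat.lt_succ_iff.mp hi).lt_or_eq with hi | rfl
    · rw [hval i hi.le, hval (i + 1) hi]
      exact hw.2 i hi
    · rw [hval i le_rfl, Function.update_self]
      exact hadj

theorem IsPathSeq.hasSubCopy_cycleGraph {m : ℕ} {w : ℕ → V} (hw : G.IsPathSeq (m + 1) w)
    (hclose : G.Adj (w (m + 1)) (w 0)) : HasSubCopy (cycleGraph (m + 2)) G := by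
  have hsucc : ∀ d : Fin (m + 2), G.Adj (w d) (w ↑(d + 1)) := by
    intro d
    rw [Fin.val_add_one]
    split_ifs with hd
    · simpa [hd] using hclose
    · exact hw.2 d (Fin.val_lt_last hd)
  refine ⟨⟨fun i => w i, fun {a b} hab => ?_⟩,
    fun a b hab => Fin.ext (hw.1 a a.is_le b b.is_le hab)⟩
  rcases cycleGraph_adj.mp hab with h | h
  · rw [sub_eq_iff_eq_add'.mp h]
    exact (hsucc b).symm
  · rw [sub_eq_iff_eq_add'.mp h]
    exact hsucc a

theorem isPathSeq_rotate {n m s : ℕ} {v : ℕ → V}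
    (hinj : ∀ i < n, ∀ j < n, v i = v j → i = j)
    (hcyc : ∀ i < n, G.Adj (v i) (v ((i + 1) % n))) (hm : m < n) :
    G.IsPathSeq m (fun i => v ((s + i) % n)) := by
  have hn : 0 < n := by omega
  refine ⟨fun i hi j hj hij => ?_, fun i _ => ?_⟩
  · have hmod := hinj _ (Nat.mod_lt _ hn) _ (Nat.mod_lt _ hn) hij
    exact Nat.ModEq.eq_of_lt_of_lt (Nat.ModEq.add_left_cancel' s hmod) (by omega) (by omega)
  · have h := hcyc ((s + i) % n) (Nat.mod_lt _ hn)
    rwa [Nat.mod_add_mod, add_assoc] at h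

theorem hasSubCopy_cycleGraph_succ_of_detour {n s : ℕ} {v : ℕ → V} {x y : V}
    (hinj : ∀ i < n, ∀ j < n, v i = v j → i = j)
    (hcyc : ∀ i < n, G.Adj (v i) (v ((i + 1) % n))) (hs : s + 2 < n)
    (hx : ∀ i < n, x ≠ v i) (hy : ∀ i < n, y ≠ v i) (hxy : G.Adj x y)
    (hvx : G.Adj (v s) x) (hyv : G.Adj y (v (s + 2))) :
    HasSubCopy (cycleGraph (n + 1)) G := by
  obtain ⟨m, rfl⟩ : ∃ m, n = m + 3 := ⟨n - 3, by omega⟩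
  have hn : 0 < m + 3 := by omega
  -- the path `v (s + 2), …, v (s + m + 3) = v s` of length `m + 1`
  have hw : G.IsPathSeq (m + 1) (fun i => v ((s + 2 + i) % (m + 3))) :=
    isPathSeq_rotate hinj hcyc (by omega)
  have hend : (s + 2 + (m + 1)) % (m + 3) = s := by
    rw [show s + 2 + (m + 1) = s + (m + 3) by omega, Nat.add_mod_right, Nat.mod_eq_of_lt (by omega)]
  have hwx := hw.snoc (fun i _ => (hx _ (Nat.mod_lt _ hn)).symm) (by simpa only [hend] using hvx)
  have hwxy := hwx.snoc (fun i hi => ?_) (by simpa using hxy)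
  · refine hwxy.hasSubCopy_cycleGraph ?_
    simpa [Nat.mod_eq_of_lt hs] using hyv
  · rcases hi.lt_or_eq with hi | rfl
    · rw [Function.update_of_ne (by omega)]
      exact (hy _ (Nat.mod_lt _ hn)).symm
    · rw [Function.update_self]
      exact hxy.ne

end SimpleGraph

/-- In a `C_{2k+1}`-free graph with a cycle `v 0, v 1, …, v (2k-1), v 0` of length `2k`
(`v i` here is `v_{i+1}` in 1-indexed notation, so the odd-indexed vertices
`v_1, v_3, …, v_{2k-1}` are `v 0, v 2, …, v (2k-2)`), both
`S_odd` (the outside vertices adjacent to all of `v 0, v 2, …, v (2k-2)`) and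
`S_even` (the outside vertices adjacent to all of `v 1, v 3, …, v (2k-1)`)
are independent sets. -/
theorem stmt_8 {V : Type*} (k : ℕ) (hk : 2 ≤ k)
    (G : SimpleGraph V) (hG : CycleFree (2 * k + 1) G)
    (v : ℕ → V)
    (hinj : ∀ i < 2 * k, ∀ j < 2 * k, v i = v j → i = j)
    (hcyc : ∀ i < 2 * k, G.Adj (v i) (v ((i + 1) % (2 * k)))) :
    (∀ x ∈ {u : V | (∀ i < 2 * k, u ≠ v i) ∧ ∀ i < k, G.Adj u (v (2 * i))},
     ∀ y ∈ {u : V | (∀ i < 2 * k, u ≠ v i) ∧ ∀ i < k, G.Adj u (v (2 * i))},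
       ¬ G.Adj x y) ∧
    (∀ x ∈ {u : V | (∀ i < 2 * k, u ≠ v i) ∧ ∀ i < k, G.Adj u (v (2 * i + 1))},
     ∀ y ∈ {u : V | (∀ i < 2 * k, u ≠ v i) ∧ ∀ i < k, G.Adj u (v (2 * i + 1))},
       ¬ G.Adj x y) := by
  constructor
  · rintro x ⟨hx, hxv⟩ y ⟨hy, hyv⟩ hxy
    exact hG (hasSubCopy_cycleGraph_succ_of_detour (s := 0) hinj hcyc (by omega) hx hy hxy
      (hxv 0 (by omega)).symm (hyv 1 (by omega)))
  · rintro x ⟨hx, hxv⟩ y ⟨hy, hyv⟩ hxy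
    exact hG (hasSubCopy_cycleGraph_succ_of_detour (s := 1) hinj hcyc (by omega) hx hy hxy
      (hxv 0 (by omega)).symm (hyv 1 (by omega)))
end

section
/- For all integers k ≥ 1 and n ≥ 1, every graph on n vertices containing no path with k edges (i.e., no P_{k+1}) has at most (k−1)n/2 edges; that is, ex(n, P_{k+1}) ≤ (k−1)n/2. -/
/-!
Induction on a set `S` of vertices that carries every edge. A vertex of `S` with fewer than `k/2`
neighbours is deleted together with its edges. If every degree is below `k`, then
`2e = ∑ deg ≤ (k - 1)|S|`. Otherwise some vertex has degree `≥ k`; its component then has more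
than `k` vertices, all of degree `≥ k/2`, and paths in it can be lengthened up to length `k`:
either an end of the path has a neighbour off the path, or (Pósa) two crossing chords at the
ends close the path into a cycle through all its vertices, and a vertex outside the cycle adjacent
to it yields a longer path.
-/

open SimpleGraph

open Finset

namespace SimpleGraph.Walk

variable {V : Type*} {G : SimpleGraph V}

theorem exists_crossing_chords [Fintype V] [DecidableRel G.Adj] {u w : V} (p : G.Walk u w)
    (hu : ∀ z, G.Adj u z → z ∈ p.support) (hw : ∀ z, G.Adj w z → z ∈ p.support)
    (hdeg : p.length < G.degree u + G.degree w) :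
    ∃ i, 0 < i ∧ i ≤ p.length ∧ G.Adj u (p.getVert i) ∧ G.Adj w (p.getVert (i - 1)) := by
  classical
  set A := {i ∈ Icc 1 p.length | G.Adj u (p.getVert i)}
  set B := {i ∈ Icc 1 p.length | G.Adj w (p.getVert (i - 1))}
  have hA : G.degree u ≤ #A := by
    rw [← card_neighborFinset_eq_degree]
    refine (card_le_card fun z hz => ?_).trans (card_image_le (f := p.getVert))
    rw [mem_neighborFinset] at hz
    obtain ⟨n, rfl, hn⟩ := mem_support_iff_exists_getVert.1 (hu _ hz)
    have hn0 : n ≠ 0 := by rintro rfl; simp at hz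
    exact mem_image.2 ⟨n, mem_filter.2 ⟨mem_Icc.2 ⟨by omega, hn⟩, hz⟩, rfl⟩
  have hB : G.degree w ≤ #B := by
    rw [← card_neighborFinset_eq_degree]
    refine (card_le_card fun z hz => ?_).trans (card_image_le (f := fun i => p.getVert (i - 1)))
    rw [mem_neighborFinset] at hz
    obtain ⟨n, rfl, hn⟩ := mem_support_iff_exists_getVert.1 (hw _ hz)
    have hnl : n ≠ p.length := by rintro rfl; simp at hz
    exact mem_image.2 ⟨n + 1, mem_filter.2 ⟨mem_Icc.2 ⟨by omega, by omega⟩, hz⟩, rfl⟩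
  obtain ⟨i, hi⟩ := inter_nonempty_of_card_lt_card_add_card (s := Icc 1 p.length) (t := A)
    (u := B) (filter_subset _ _) (filter_subset _ _) (by rw [Nat.card_Icc]; omega)
  simp only [A, B, mem_inter, mem_filter, mem_Icc] at hi
  exact ⟨i, hi.1.1.1, hi.1.1.2, hi.1.2, hi.2.2⟩

-- The closed walk `u, xᵢ, …, w, xᵢ₋₁, …, x₀ = u` with `xⱼ = p.getVert j`. For `p.length = 1` it
-- runs twice along one edge, hence `support.tail.Perm` rather than `IsCycle`.
theorem exists_closed_of_crossing_chords {u w : V} (p : G.Walk u w) {i : ℕ} (hi : 0 < i)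
    (hil : i ≤ p.length) (hu : G.Adj u (p.getVert i)) (hw : G.Adj w (p.getVert (i - 1))) :
    ∃ c : G.Walk u u, c.length = p.length + 1 ∧ c.support.tail.Perm p.support := by
  refine ⟨cons hu ((p.drop i).append (cons hw (p.take (i - 1)).reverse)), ?_, ?_⟩
  · simp only [length_cons, length_append, drop_length, length_reverse, take_length]
    omega
  · rw [support_cons, List.tail_cons, support_append, support_cons, List.tail_cons,
      support_reverse, support_take, drop_support_eq_support_drop_min, min_eq_left hil,
      Nat.sub_add_cancel hi]
    exact List.perm_append_comm.trans ((List.reverse_perm _).append_right _) |>.trans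
      (by rw [List.take_append_drop])

theorem exists_isPath_of_mem_support_closed [DecidableEq V] {v a : V} (c : G.Walk v v)
    (hc : c.support.tail.Nodup) (hnil : ¬ c.Nil) (ha : a ∈ c.support) :
    ∃ x, ∃ q : G.Walk a x, q.IsPath ∧ q.length + 1 = c.length ∧ q.support ⊆ c.support := by
  set c' := c.rotate a ha
  have hnil' : ¬ c'.Nil := by rwa [nil_rotate]
  refine ⟨_, c'.tail.reverse, ?_, ?_, fun x hx => ?_⟩
  · rw [isPath_reverse_iff, isPath_def, support_tail_of_not_nil _ hnil']
    exact (support_rotate c a ha).perm.nodup_iff.2 hc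
  · rw [length_reverse, length_tail_add_one hnil', length_rotate]
  · rw [support_reverse, List.mem_reverse, support_tail_of_not_nil _ hnil'] at hx
    exact (mem_support_rotate_iff c a ha).1 (List.mem_of_mem_tail hx)

end SimpleGraph.Walk

namespace SimpleGraph

variable {V : Type*} {G : SimpleGraph V} [Fintype V] [DecidableEq V] [DecidableRel G.Adj]

open Walk

theorem Walk.IsPath.exists_isPath_length_succ {v u w : V} {p : G.Walk u w} (hp : p.IsPath)
    (hvu : G.Reachable v u) (hdeg : p.length < G.degree u + G.degree w)
    (hcard : p.length + 1 < #{x | G.Reachable v x}) :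
    ∃ u' w', ∃ q : G.Walk u' w', G.Reachable v u' ∧ q.IsPath ∧ q.length = p.length + 1 := by
  by_cases hu : ∃ z, G.Adj u z ∧ z ∉ p.support
  · obtain ⟨z, hz, hzp⟩ := hu
    exact ⟨z, w, cons hz.symm p, hvu.trans hz.reachable, hp.cons hzp, rfl⟩
  by_cases hw : ∃ z, G.Adj w z ∧ z ∉ p.support
  · obtain ⟨z, hz, hzp⟩ := hw
    exact ⟨z, u, cons hz.symm p.reverse, hvu.trans (p.reachable.trans hz.reachable),
      hp.reverse.cons (by simpa using hzp), by simp⟩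
  push Not at hu hw
  obtain ⟨i, hi, hil, hui, hwi⟩ := p.exists_crossing_chords hu hw hdeg
  obtain ⟨c, hcl, hcp⟩ := p.exists_closed_of_crossing_chords hi hil hui hwi
  have hmem : ∀ x, x ∈ c.support ↔ x ∈ p.support := fun x => by
    rw [← cons_tail_support, List.mem_cons, hcp.mem_iff, or_iff_right_iff_imp]
    rintro rfl
    exact p.start_mem_support
  obtain ⟨z, hvz, hzp⟩ : ∃ z, G.Reachable v z ∧ z ∉ p.support := by
    by_contra! h
    have hsub : ({x | G.Reachable v x} : Finset V) ⊆ p.support.toFinset :=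
      fun x hx => List.mem_toFinset.2 (h x (mem_filter.1 hx).2)
    have := (card_le_card hsub).trans (List.toFinset_card_le _)
    rw [length_support] at this
    omega
  obtain ⟨d, -, hd, hdp⟩ := (hvu.symm.trans hvz).some.exists_boundary_dart
    {x | x ∈ p.support} p.start_mem_support hzp
  obtain ⟨x, q, hq, hql, hqc⟩ := c.exists_isPath_of_mem_support_closed
    (hcp.nodup_iff.2 hp.support_nodup) (by rw [← length_eq_zero_iff, hcl]; omega) ((hmem _).2 hd)
  exact ⟨d.snd, x, cons d.adj.symm q,
    hvu.trans ((p.takeUntil _ hd).reachable.trans d.adj.reachable),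
    hq.cons fun h => hdp ((hmem _).1 (hqc h)), by rw [length_cons, hql, hcl]⟩

theorem isContained_pathGraph_of_le_two_mul_degree (v : V) {k : ℕ}
    (hdeg : ∀ w, G.Reachable v w → k ≤ 2 * G.degree w) (hcard : k < #{w | G.Reachable v w}) :
    pathGraph (k + 1) ⊑ G := by
  suffices ∀ ℓ ≤ k, ∃ u w, ∃ p : G.Walk u w, G.Reachable v u ∧ p.IsPath ∧ p.length = ℓ by
    obtain ⟨u, w, p, -, hp, hpk⟩ := this k le_rfl
    exact hpk ▸ hp.isContained_pathGraph
  intro ℓ hℓ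
  induction ℓ with
  | zero => exact ⟨v, v, nil, .refl v, .nil, rfl⟩
  | succ ℓ ih =>
    obtain ⟨u, w, p, hvu, hp, rfl⟩ := ih (by omega)
    have hu := hdeg u hvu
    have hw := hdeg w (hvu.trans p.reachable)
    exact hp.exists_isPath_length_succ hvu (by omega) (by omega)

theorem two_mul_card_edgeFinset_le_of_not_isContained_pathGraph {k : ℕ}
    (hG : ¬ pathGraph (k + 1) ⊑ G) {S : Finset V} (hS : G.support ⊆ S) :
    2 * #G.edgeFinset ≤ (k - 1) * #S := by
  induction S using Finset.strongInduction generalizing G with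
  | H S ih =>
    by_cases hlow : ∃ v ∈ S, 2 * G.degree v < k
    · obtain ⟨v, hvS, hv⟩ := hlow
      have hS' : (G.deleteIncidenceSet v).support ⊆ S.erase v := fun x hx => by
        have hx' := G.support_deleteIncidenceSet_subset v hx
        exact mem_erase.2 ⟨hx'.2, hS hx'.1⟩
      have hih := ih _ (erase_ssubset hvS)
        (fun h => hG (h.mono_right (G.deleteIncidenceSet_le v))) hS'
      rw [card_edgeFinset_deleteIncidenceSet, card_erase_of_mem hvS] at hih
      have hv_le := G.degree_le_card_edgeFinset (v := v)
      obtain ⟨m, hm⟩ : ∃ m, #S = m + 1 := ⟨#S - 1, by have := card_pos.2 ⟨v, hvS⟩; omega⟩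
      rw [hm, Nat.add_sub_cancel] at hih
      rw [hm, mul_add_one]
      omega
    push Not at hlow
    by_cases hhigh : ∃ v, k ≤ G.degree v
    · obtain ⟨v, hv⟩ := hhigh
      refine absurd (isContained_pathGraph_of_le_two_mul_degree v (fun w hw => ?_) ?_) hG
      · obtain rfl | hk := Nat.eq_zero_or_pos k
        · exact Nat.zero_le _
        have hw_supp : w ∈ G.support := by
          by_cases hwv : w = v
          · rw [hwv, ← degree_pos_iff_mem_support]
            omega
          · exact mem_support_of_reachable hwv hw.symm
        exact hlow w (hS hw_supp)
      · calc k < G.degree v + 1 := by omega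
          _ = #(insert v (G.neighborFinset v)) := by
            rw [card_insert_of_notMem (by simp), card_neighborFinset_eq_degree]
          _ ≤ #{w | G.Reachable v w} := card_le_card fun x hx => by
            rcases mem_insert.1 hx with rfl | hx
            · simp
            · simpa using (mem_neighborFinset _ _ _).1 hx |>.reachable
    push Not at hhigh
    calc 2 * #G.edgeFinset = ∑ v, G.degree v := G.sum_degrees_eq_twice_card_edges.symm
      _ = ∑ v ∈ S, G.degree v := (sum_subset (subset_univ S) fun x _ hx =>
          (G.degree_eq_zero_iff_notMem_support x).2 fun h => hx (hS h)).symm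
      _ ≤ ∑ _v ∈ S, (k - 1) := sum_le_sum fun v _ => by have := hhigh v; omega
      _ = (k - 1) * #S := by rw [sum_const, smul_eq_mul, mul_comm]

end SimpleGraph

theorem stmt_13_general (k n : ℕ) (hk : 1 ≤ k)
    (G : SimpleGraph (Fin n)) (hG : ¬ HasSubCopy (pathGraph (k + 1)) G) :
    (G.edgeSet.ncard : ℝ) ≤ ((k : ℝ) - 1) * n / 2 := by
  classical
  have h := two_mul_card_edgeFinset_le_of_not_isContained_pathGraph
    (fun ⟨f⟩ => hG ⟨f.toHom, f.injective⟩) (S := univ) (by simp)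
  rw [card_univ, Fintype.card_fin] at h
  have hcast : (2 * G.edgeSet.ncard : ℝ) ≤ (k - 1 : ℕ) * n := by
    rw [Set.ncard_eq_toFinset_card']
    exact_mod_cast h
  rw [Nat.cast_sub hk] at hcast
  push_cast at hcast
  linarith

/-- Erdős–Gallai: every graph on `n` vertices with no path on `k+1` vertices
(i.e. no path with `k` edges) has at most `(k-1)n/2` edges. -/
theorem stmt_13 (k n : ℕ) (hk : 1 ≤ k) (hn : 1 ≤ n)
    (G : SimpleGraph (Fin n)) (hG : ¬ HasSubCopy (pathGraph (k + 1)) G) :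
    (G.edgeSet.ncard : ℝ) ≤ ((k : ℝ) - 1) * n / 2 :=
  stmt_13_general k n hk G hG
end

section
/- Let r ≥ 2 and n ≥ 2r+1 be integers. If G is a K_{r+1}-free graph on n vertices with e(G) ≥ t_r(n) − ⌊n/r⌋ + 2, then G is r-partite, i.e., its vertex set can be partitioned into r independent sets. -/
/-!
Induction on the number `n` of vertices. If `e(G) ≥ t_r(n)`, then `G` is Turán-maximal, hence
isomorphic to the Turán graph. Otherwise some vertex `v` has degree less than `n - ⌊n/r⌋`, the
hypothesis passes to `G - v`, and `G - v` has a proper colouring `C` with `r` colours. If a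
colour is missing on the neighbourhood of `v`, give it to `v`. Otherwise let `U a` be the
neighbours of `v` of colour `a`. As `G` is `K_{r+1}`-free, no transversal of the `U a` is a
clique, and double counting shows that, for some `a ≠ b`, `G - v` misses at least
`#U a * #U b ≥ #U a + #U b - 1` edges of the complete `r`-partite graph `K` on the colour classes.
Hence `e(G) ≤ e(K) + 1 + #{w | C w ≠ a, b}`, and the tangent-line bound
`x² ≥ (2q + 1) x - q (q + 1)` on the class sizes shows this to be at most `t_r(n) - ⌊n/r⌋ + 1`.
-/

open Finset SimpleGraph

section CompleteMultipartite

variable {V ι : Type*} [Fintype V] [Fintype ι] [DecidableEq ι]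

lemma two_mul_card_edgeFinset_comap_top_add_sum_sq (c : V → ι) :
    2 * #((⊤ : SimpleGraph ι).comap c).edgeFinset + ∑ i, #{v | c v = i} ^ 2
      = Fintype.card V ^ 2 := by
  have hdeg (v : V) :
      ((⊤ : SimpleGraph ι).comap c).degree v + #{w | c w = c v} = Fintype.card V := by
    rw [← card_neighborFinset_eq_degree, neighborFinset_eq_filter]
    simpa [eq_comm] using card_filter_add_card_filter_not (s := univ) (fun w => c v ≠ c w)
  have hsq : ∑ v, #{w | c w = c v} = ∑ i, #{v | c v = i} ^ 2 := by
    rw [← sum_fiberwise_of_maps_to (g := c) (t := univ) (fun _ _ => mem_univ _)]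
    refine Finset.sum_congr rfl fun i _ => ?_
    rw [Finset.sum_congr rfl fun v hv => by rw [(mem_filter.1 hv).2], sum_const, smul_eq_mul, sq]
  rw [← sum_degrees_eq_twice_card_edges, ← hsq, ← sum_add_distrib,
    Finset.sum_congr rfl fun v _ => hdeg v]
  simp [sq]

end CompleteMultipartite

section TuranNumber

lemma card_filter_val_mod_eq {n r : ℕ} (hr : 0 < r) (j : Fin r) :
    #{v : Fin n | (v : ℕ) % r = j} = n / r + if (j : ℕ) < n % r then 1 else 0 := by
  rw [← Nat.mod_eq_of_lt j.2, ← Nat.count_modEq_card _ hr, Nat.count_eq_card_filter_range,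
    card_filter, card_filter, ← Fin.sum_univ_eq_sum_range fun k => if k ≡ j [MOD r] then 1 else 0]
  rfl

lemma two_mul_card_edgeFinset_turanGraph_add {n r : ℕ} (hr : 0 < r) :
    2 * #(turanGraph n r).edgeFinset + (2 * (n / r) + 1) * n
      = n ^ 2 + r * (n / r * (n / r + 1)) := by
  let c : Fin n → Fin r := fun v => ⟨v % r, Nat.mod_lt _ hr⟩
  have hK := two_mul_card_edgeFinset_comap_top_add_sum_sq c
  have hT : #(turanGraph n r).edgeFinset = #((⊤ : SimpleGraph (Fin r)).comap c).edgeFinset :=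
    Iso.card_edgeFinset_eq ⟨Equiv.refl _, by simp [c, turanGraph_adj, Fin.ext_iff]⟩
  simp only [← hT, c, Fin.ext_iff, Fintype.card_fin] at hK
  have hsum : ∑ j : Fin r, #{v : Fin n | (v : ℕ) % r = j} = n := by
    simpa [c, Fin.ext_iff] using (card_eq_sum_card_fiberwise (s := univ) (t := univ) (f := c)
      fun _ _ => mem_univ _).symm
  have hsq (j : Fin r) : #{v : Fin n | (v : ℕ) % r = j} ^ 2 + n / r * (n / r + 1)
      = (2 * (n / r) + 1) * #{v : Fin n | (v : ℕ) % r = j} := by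
    rw [card_filter_val_mod_eq hr]
    split_ifs <;> ring
  have := Finset.sum_congr rfl fun j (_ : j ∈ univ) => hsq j
  rw [sum_add_distrib, sum_const, ← mul_sum, hsum, card_univ, Fintype.card_fin,
    smul_eq_mul] at this
  linarith

lemma card_edgeFinset_turanGraph_succ_add {m r : ℕ} (hr : 0 < r) :
    #(turanGraph (m + 1) r).edgeFinset + m / r = #(turanGraph m r).edgeFinset + m := by
  have h₁ := two_mul_card_edgeFinset_turanGraph_add (n := m + 1) hr
  have h₂ := two_mul_card_edgeFinset_turanGraph_add (n := m) hr
  rw [Nat.succ_div] at h₁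
  split_ifs at h₁ with hdvd
  · have hq : r * (m / r + 1) = m + 1 := by
      rw [← Nat.succ_div_of_dvd hdvd]; exact Nat.mul_div_cancel' hdvd
    nlinarith
  · nlinarith

lemma two_mul_add_one_mul_le_sq_add (x q : ℕ) : (2 * q + 1) * x ≤ x ^ 2 + q * (q + 1) := by
  rcases le_or_gt x q with h | h <;> nlinarith

/-- With `m = card W`: adding one vertex to class `i` and one to class `j` of the complete
`r`-partite graph `⊤.comap c` gives an `r`-partite graph on `m + 2` vertices, hence with at most
`t_r(m + 2) = t_r(m + 1) + m + 1 - ⌊(m + 1)/r⌋` edges. -/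
lemma card_edgeFinset_comap_top_add_card_filter_add_le {W : Type*} [Fintype W] {r : ℕ}
    (c : W → Fin r) {i j : Fin r} (hij : i ≠ j) :
    #((⊤ : SimpleGraph (Fin r)).comap c).edgeFinset + #{w | c w ≠ i ∧ c w ≠ j}
      + (Fintype.card W + 1) / r ≤ #(turanGraph (Fintype.card W + 1) r).edgeFinset := by
  set m := Fintype.card W
  set q := (m + 1) / r
  set s : Fin r → ℕ := fun k => #{w | c w = k}
  set R := (univ.erase i).erase j
  have hj : j ∈ univ.erase i := mem_erase.2 ⟨hij.symm, mem_univ j⟩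
  have hsplit (g : Fin r → ℕ) : ∑ k, g k = g i + g j + ∑ k ∈ R, g k := by
    rw [← add_sum_erase _ _ (mem_univ i), ← add_sum_erase _ _ hj, add_assoc]
  have hK : 2 * #((⊤ : SimpleGraph (Fin r)).comap c).edgeFinset + ∑ k, s k ^ 2 = m ^ 2 :=
    two_mul_card_edgeFinset_comap_top_add_sum_sq c
  have hsum : ∑ k, s k = m := by
    simpa using (card_eq_sum_card_fiberwise (s := univ) (t := univ) (f := c)
      fun _ _ => mem_univ _).symm
  have hrest : #{w | c w ≠ i ∧ c w ≠ j} = ∑ k ∈ R, s k := by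
    rw [sum_card_fiberwise_eq_card_filter]
    simp [R, and_comm]
  have hR : (#R : ℕ) + 2 = r := by
    rw [card_erase_of_mem hj, card_erase_of_mem (mem_univ i), card_univ, Fintype.card_fin]
    have := i.pos; have : j.val ≠ i.val := fun h => hij (Fin.ext h.symm)
    omega
  have htanR : (2 * q + 1) * ∑ k ∈ R, s k ≤ ∑ k ∈ R, s k ^ 2 + #R * (q * (q + 1)) := by
    have := sum_le_sum fun k (_ : k ∈ R) => two_mul_add_one_mul_le_sq_add (s k) q
    rwa [sum_add_distrib, sum_const, smul_eq_mul, ← mul_sum] at this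
  have htan_i := two_mul_add_one_mul_le_sq_add (s i + 1) q
  have htan_j := two_mul_add_one_mul_le_sq_add (s j + 1) q
  have hT : 2 * #(turanGraph (m + 1) r).edgeFinset + (2 * q + 1) * (m + 1)
      = (m + 1) ^ 2 + r * (q * (q + 1)) := two_mul_card_edgeFinset_turanGraph_add i.pos
  have hr : r * (q * (q + 1)) = (#R + 2) * (q * (q + 1)) := by rw [hR]
  rw [hrest]
  generalize #(turanGraph (m + 1) r).edgeFinset = t at hT ⊢
  clear_value m q s R
  subst hsum
  rw [hsplit, hsplit s] at hK
  rw [hsplit s] at hT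
  nlinarith

lemma turanGraph_colorable {n r : ℕ} (hr : 0 < r) : (turanGraph n r).Colorable r :=
  ⟨Coloring.mk (fun v => ⟨v % r, Nat.mod_lt _ hr⟩) fun h => by
    simpa [Fin.ext_iff, turanGraph_adj] using h⟩

end TuranNumber

section Transversal

variable {W ι : Type*} [DecidableEq W] [Fintype ι] [DecidableEq ι]

lemma mul_card_filter_piFinset_eq_and_eq_le (U : ι → Finset W) {i j : ι} (hij : i ≠ j)
    (x y : W) :
    #(U i) * #(U j) * #{f ∈ Fintype.piFinset U | f i = x ∧ f j = y}
      ≤ #(Fintype.piFinset U) := by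
  by_cases hxy : x ∈ U i ∧ y ∈ U j
  · obtain ⟨hx, hy⟩ := hxy
    have hy' : y ∈ Function.update U i {x} j := by rwa [Function.update_of_ne hij.symm]
    have hj : i ∈ univ.erase j := mem_erase.2 ⟨hij, mem_univ i⟩
    have hrest : ∏ k ∈ (univ.erase j).erase i, #(Function.update U i {x} k)
        = ∏ k ∈ (univ.erase j).erase i, #(U k) :=
      prod_congr rfl fun k hk => by rw [Function.update_of_ne (mem_erase.1 hk).1]
    rw [← filter_filter, ← Fintype.piFinset_update_singleton_eq_filter_piFinset_eq _ _ hx,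
      Fintype.card_filter_piFinset_eq_of_mem _ _ hy', Fintype.card_piFinset,
      ← mul_prod_erase _ _ hj, ← mul_prod_erase univ _ (mem_univ j), ← mul_prod_erase _ _ hj,
      hrest]
    simp only [Function.update_self, card_singleton]
    apply le_of_eq; ring
  · rw [filter_eq_empty_iff.2 fun f hf (hfxy : f i = x ∧ f j = y) =>
      hxy ⟨hfxy.1 ▸ Fintype.mem_piFinset.1 hf i, hfxy.2 ▸ Fintype.mem_piFinset.1 hf j⟩]
    simp

variable [Fintype W]

lemma exists_mul_card_le_card_edgeFinset_of_forall_piFinset (D : SimpleGraph W)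
    [Fintype D.edgeSet] (c : W → ι) (U : ι → Finset W) (hU : ∀ i, ∀ w ∈ U i, c w = i)
    (hne : ∀ i, (U i).Nonempty) (hD : ∀ f ∈ Fintype.piFinset U, ∃ i j, D.Adj (f i) (f j)) :
    ∃ i j, i ≠ j ∧ #(U i) * #(U j) ≤ #D.edgeFinset := by
  set T := Fintype.piFinset U
  have hT : T.Nonempty := Fintype.piFinset_nonempty.2 hne
  obtain ⟨i₀, j₀, h₀⟩ := hD _ hT.choose_spec
  obtain ⟨⟨i, j⟩, hij, hmin⟩ := exists_min_image univ.offDiag (fun p => #(U p.1) * #(U p.2))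
    ⟨(i₀, j₀), mem_offDiag.2 ⟨mem_univ _, mem_univ _, fun h => D.ne_of_adj h₀ (congrArg _ h)⟩⟩
  refine ⟨i, j, (mem_offDiag.1 hij).2.2, ?_⟩
  -- Double count the pairs `(f, e)` with `e` an edge of `D` between two values of `f`: each
  -- transversal has one, and an edge between the classes `c x ≠ c y` lies in at most
  -- `#T / (#U (c x) * #U (c y))` transversals.
  let R : (ι → W) → Sym2 W → Prop := fun f e => ∀ x ∈ e, f (c x) = x
  have habove : ∀ f ∈ T, 1 ≤ #(D.edgeFinset.bipartiteAbove R f) := by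
    intro f hf
    obtain ⟨a, b, hab⟩ := hD f hf
    refine one_le_card.2 ⟨s(f a, f b), mem_filter.2 ⟨(mem_edgeFinset).2 hab, ?_⟩⟩
    simp only [R, Sym2.mem_iff]
    rintro x (rfl | rfl) <;> rw [hU _ _ (Fintype.mem_piFinset.1 hf _)]
  have hbelow : ∀ e ∈ D.edgeFinset, #(U i) * #(U j) * #(T.bipartiteBelow R e) ≤ #T := by
    intro e he
    induction e using Sym2.ind with | _ x y
    by_cases hxy : c x = c y
    · rw [bipartiteBelow, filter_eq_empty_iff.2 fun f _ hf => (mem_edgeFinset.1 he).ne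
        ((hf x (Sym2.mem_mk_left x y)).symm.trans (hxy ▸ hf y (Sym2.mem_mk_right x y)))]
      simp
    calc #(U i) * #(U j) * #(T.bipartiteBelow R s(x, y))
        ≤ #(U (c x)) * #(U (c y)) * #{f ∈ T | f (c x) = x ∧ f (c y) = y} := by
          refine Nat.mul_le_mul (hmin (c x, c y) (mem_offDiag.2 ⟨mem_univ _, mem_univ _, hxy⟩))
            (card_le_card fun f hf => ?_)
          obtain ⟨hfT, hf⟩ := mem_filter.1 hf
          exact mem_filter.2 ⟨hfT, hf x (Sym2.mem_mk_left x y), hf y (Sym2.mem_mk_right x y)⟩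
      _ ≤ #T := mul_card_filter_piFinset_eq_and_eq_le U hxy x y
  have hcount := sum_card_bipartiteAbove_eq_sum_card_bipartiteBelow
    (s := T) (t := D.edgeFinset) (r := R)
  refine Nat.le_of_mul_le_mul_right ?_ hT.card_pos
  calc #(U i) * #(U j) * #T
      ≤ #(U i) * #(U j) * ∑ f ∈ T, #(D.edgeFinset.bipartiteAbove R f) := by
        gcongr; simpa using sum_le_sum habove
    _ = ∑ e ∈ D.edgeFinset, #(U i) * #(U j) * #(T.bipartiteBelow R e) := by
        rw [hcount, mul_sum]
    _ ≤ ∑ _e ∈ D.edgeFinset, #T := sum_le_sum hbelow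
    _ = #D.edgeFinset * #T := by rw [sum_const, smul_eq_mul]

end Transversal

section Deletion

variable {V : Type*} [DecidableEq V] (G : SimpleGraph V)

lemma nonempty_coloring_of_coloring_induce_compl_singleton {α : Type*} {v : V}
    (C : (G.induce {v}ᶜ).Coloring α) (a : α) (ha : ∀ w : ↥({v}ᶜ : Set V), G.Adj v w → C w ≠ a) :
    Nonempty (G.Coloring α) := by
  refine ⟨Coloring.mk (fun w => if h : w = v then a else C ⟨w, h⟩) fun {x y} hxy => ?_⟩
  by_cases hx : x = v <;> by_cases hy : y = v
  · exact absurd (hx.trans hy.symm) (G.ne_of_adj hxy)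
  · simpa [hx, hy] using (ha ⟨y, hy⟩ (hx ▸ hxy)).symm
  · simpa [hx, hy] using ha ⟨x, hx⟩ (hy ▸ hxy.symm)
  · simpa [hx, hy] using C.valid (show (G.induce {v}ᶜ).Adj ⟨x, hx⟩ ⟨y, hy⟩ from hxy)

lemma not_cliqueFree_of_forall_adj {r : ℕ} {v : V} {f : Fin r → V} (hv : ∀ i, G.Adj v (f i))
    (hf : Pairwise fun i j => G.Adj (f i) (f j)) : ¬ G.CliqueFree (r + 1) := by
  have hinj : f.Injective := fun i j hij => by
    by_contra h; exact G.ne_of_adj (hf h) hij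
  have hclique : G.IsNClique r (univ.map ⟨f, hinj⟩) := by
    refine ⟨?_, by simp⟩
    simp only [coe_map, Function.Embedding.coeFn_mk, coe_univ, Set.image_univ]
    rintro _ ⟨i, rfl⟩ _ ⟨j, rfl⟩ hij
    exact hf fun h => hij (congrArg f h)
  exact fun hG => hG _ (hclique.insert (by simpa using hv))

lemma exists_adj_sdiff_induce_of_cliqueFree {r : ℕ} (hG : G.CliqueFree (r + 1)) {v : V}
    (C : (G.induce {v}ᶜ).Coloring (Fin r)) (f : Fin r → ↥({v}ᶜ : Set V))
    (hf : ∀ a, G.Adj v (f a) ∧ C (f a) = a) :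
    ∃ a b, ((⊤ : SimpleGraph (Fin r)).comap C \ G.induce {v}ᶜ).Adj (f a) (f b) := by
  by_contra! h
  refine not_cliqueFree_of_forall_adj G (f := fun a => (f a : V)) (fun a => (hf a).1)
    (fun a b hab => ?_) hG
  by_contra hnadj
  exact h a b ⟨by simpa [(hf a).2, (hf b).2] using hab, hnadj⟩

variable [Fintype V]

lemma card_compl_singleton_add_one (v : V) :
    Fintype.card ↥({v}ᶜ : Set V) + 1 = Fintype.card V := by
  rw [Fintype.card_compl_set, Set.card_singleton]
  have := Fintype.card_pos_iff.2 ⟨v⟩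
  omega

lemma card_edgeFinset_induce_compl_singleton_add_degree [DecidableRel G.Adj] (v : V) :
    #(G.induce {v}ᶜ).edgeFinset + G.degree v = #G.edgeFinset := by
  rw [card_edgeFinset_induce_compl_singleton, card_edgeFinset_deleteIncidenceSet]
  have := G.degree_le_card_edgeFinset v
  omega

lemma card_filter_adj_compl_singleton [DecidableRel G.Adj] (v : V) :
    #{w : ↥({v}ᶜ : Set V) | G.Adj v w} = G.degree v := by
  rw [← card_neighborFinset_eq_degree, ← card_map (Function.Embedding.subtype _)]
  congr 1
  ext x
  simp only [mem_map, mem_filter, mem_univ, true_and, Function.Embedding.coe_subtype,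
    mem_neighborFinset]
  exact ⟨fun ⟨w, hw, hwx⟩ => hwx ▸ hw, fun hx => ⟨⟨x, (G.ne_of_adj hx).symm⟩, hx, rfl⟩⟩

lemma degree_le_card_filter_add_card_filter_add_card_filter [DecidableRel G.Adj] {α : Type*}
    [DecidableEq α] {v : V} (c : ↥({v}ᶜ : Set V) → α) (a b : α) :
    G.degree v ≤ #{w : ↥({v}ᶜ : Set V) | G.Adj v w ∧ c w = a}
      + #{w : ↥({v}ᶜ : Set V) | G.Adj v w ∧ c w = b}
      + #{w : ↥({v}ᶜ : Set V) | c w ≠ a ∧ c w ≠ b} := by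
  rw [← card_filter_adj_compl_singleton]
  refine (card_le_card fun w hw => ?_).trans ((card_union_le _ _).trans
    (Nat.add_le_add_right (card_union_le _ _) _))
  have hw := (mem_filter.1 hw).2
  by_cases hwa : c w = a
  · simp [hw, hwa]
  by_cases hwb : c w = b
  · simp [hw, hwb]
  · simp [hwa, hwb]

end Deletion

section Stability

variable {V : Type*} [Fintype V] (G : SimpleGraph V) [DecidableRel G.Adj] {r : ℕ}

lemma colorable_of_cliqueFree_of_card_turanGraph_le (hr : 0 < r) (hG : G.CliqueFree (r + 1))
    (h : #(turanGraph (Fintype.card V) r).edgeFinset ≤ #G.edgeFinset) : G.Colorable r := by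
  have hmax : G.IsTuranMaximal r :=
    ⟨hG, fun H _ hH => (hH.card_edgeFinset_le.trans_eq card_edgeFinset_turanGraph.symm).trans h⟩
  obtain ⟨f⟩ := hmax.nonempty_iso_turanGraph
  exact (turanGraph_colorable hr).of_hom f.toHom

lemma exists_degree_add_lt_of_card_lt_turanGraph (hr : 0 < r)
    (h : #G.edgeFinset < #(turanGraph (Fintype.card V) r).edgeFinset) :
    ∃ v, G.degree v + Fintype.card V / r < Fintype.card V := by
  set n := Fintype.card V
  by_contra! hdeg
  have hsum : n * n ≤ 2 * #G.edgeFinset + n * (n / r) := by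
    calc n * n = ∑ _v : V, n := by simp [n]
      _ ≤ ∑ v, (G.degree v + n / r) := sum_le_sum fun v _ => hdeg v
      _ = 2 * #G.edgeFinset + n * (n / r) := by
        simp [sum_add_distrib, sum_degrees_eq_twice_card_edges, n]
  have hT := two_mul_card_edgeFinset_turanGraph_add (n := n) hr
  have hrq : r * (n / r * (n / r + 1)) ≤ n * (n / r + 1) := by
    rw [← mul_assoc]; exact Nat.mul_le_mul_right _ (Nat.mul_div_le n r)
  nlinarith

variable [DecidableEq V]

lemma colorable_of_colorable_induce_compl_singleton (hG : G.CliqueFree (r + 1)) (v : V)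
    (hcol : (G.induce {v}ᶜ).Colorable r)
    (he : #(turanGraph (Fintype.card V) r).edgeFinset + 2
      ≤ #G.edgeFinset + Fintype.card V / r) :
    G.Colorable r := by
  obtain ⟨C⟩ := hcol
  by_cases hfree : ∃ a, ∀ w : ↥({v}ᶜ : Set V), G.Adj v w → C w ≠ a
  · obtain ⟨a, ha⟩ := hfree
    exact nonempty_coloring_of_coloring_induce_compl_singleton G C a ha
  push Not at hfree
  exfalso
  let K := (⊤ : SimpleGraph (Fin r)).comap C
  let U (a : Fin r) : Finset ↥({v}ᶜ : Set V) := {w | G.Adj v w ∧ C w = a}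
  have hne a : (U a).Nonempty := by
    obtain ⟨w, hw⟩ := hfree a
    exact ⟨w, mem_filter.2 ⟨mem_univ _, hw⟩⟩
  have hD f (hf : f ∈ Fintype.piFinset U) :=
    exists_adj_sdiff_induce_of_cliqueFree G hG C f fun a =>
      (mem_filter.1 (Fintype.mem_piFinset.1 hf a)).2
  obtain ⟨a, b, hab, hmul⟩ := exists_mul_card_le_card_edgeFinset_of_forall_piFinset
    (K \ G.induce {v}ᶜ) C U (fun a w hw => (mem_filter.1 hw).2.2) hne hD
  have hK : #(G.induce {v}ᶜ).edgeFinset + #(K \ G.induce {v}ᶜ).edgeFinset = #K.edgeFinset := by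
    rw [edgeFinset_sdiff, add_comm]
    exact card_sdiff_add_card_eq_card (edgeFinset_mono fun x y h => C.valid h)
  have hdeg : G.degree v ≤ #(U a) + #(U b) + #{w : ↥({v}ᶜ : Set V) | C w ≠ a ∧ C w ≠ b} :=
    degree_le_card_filter_add_card_filter_add_card_filter G C a b
  have hprod : #(U a) + #(U b) ≤ #(U a) * #(U b) + 1 := by
    have := (hne a).card_pos; have := (hne b).card_pos; nlinarith
  have hbound : #K.edgeFinset + #{w : ↥({v}ᶜ : Set V) | C w ≠ a ∧ C w ≠ b}
      + Fintype.card V / r ≤ #(turanGraph (Fintype.card V) r).edgeFinset := by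
    rw [← card_compl_singleton_add_one v]
    exact card_edgeFinset_comap_top_add_card_filter_add_le C hab
  have hsplit := card_edgeFinset_induce_compl_singleton_add_degree G v
  omega

lemma card_turanGraph_add_two_le_induce_compl_singleton (hr : 0 < r) {v : V}
    (hv : G.degree v + Fintype.card V / r < Fintype.card V)
    (he : #(turanGraph (Fintype.card V) r).edgeFinset + 2 ≤ #G.edgeFinset + Fintype.card V / r) :
    #(turanGraph (Fintype.card ↥({v}ᶜ : Set V)) r).edgeFinset + 2
      ≤ #(G.induce {v}ᶜ).edgeFinset + Fintype.card ↥({v}ᶜ : Set V) / r := by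
  have hsucc := card_edgeFinset_turanGraph_succ_add (m := Fintype.card ↥({v}ᶜ : Set V)) hr
  rw [card_compl_singleton_add_one] at hsucc
  have hsplit := card_edgeFinset_induce_compl_singleton_add_degree G v
  have hW := card_compl_singleton_add_one v
  omega

theorem colorable_of_cliqueFree_of_card_turanGraph_add_two_le (hr : 2 ≤ r)
    (hV : 2 * r + 1 ≤ Fintype.card V) (hG : G.CliqueFree (r + 1))
    (he : #(turanGraph (Fintype.card V) r).edgeFinset + 2 ≤ #G.edgeFinset + Fintype.card V / r) :
    G.Colorable r := by
  induction hn : Fintype.card V generalizing V with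
  | zero => omega
  | succ m ih =>
    by_cases hmax : #(turanGraph (Fintype.card V) r).edgeFinset ≤ #G.edgeFinset
    · exact colorable_of_cliqueFree_of_card_turanGraph_le G (by omega) hG hmax
    obtain ⟨v, hv⟩ := exists_degree_add_lt_of_card_lt_turanGraph G (by omega) (not_le.1 hmax)
    -- `⌊n/r⌋ = 2` would force `e(G) ≥ t_r(n)`.
    have hq : 3 ≤ Fintype.card V / r := by
      have : 2 ≤ Fintype.card V / r := (Nat.le_div_iff_mul_le (by omega)).2 (by omega)
      by_contra h
      have : Fintype.card V / r = 2 := by omega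
      omega
    have h3r := (Nat.le_div_iff_mul_le (by omega)).1 hq
    have hW := card_compl_singleton_add_one v
    refine colorable_of_colorable_induce_compl_singleton G hG v ?_ he
    exact ih (G.induce {v}ᶜ) (by omega) (hG.comap (Embedding.induce _).isContained)
      (card_turanGraph_add_two_le_induce_compl_singleton G (by omega) hv he) (by omega)

end Stability

/-- Brouwer's stability theorem: for `r ≥ 2` and `n ≥ 2r+1`, every `K_{r+1}`-free graph
on `n` vertices with at least `t_r(n) - ⌊n/r⌋ + 2` edges is `r`-partite. -/
theorem stmt_15 (r n : ℕ) (hr : 2 ≤ r) (hn : 2 * r + 1 ≤ n)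
    (G : SimpleGraph (Fin n)) (hG : G.CliqueFree (r + 1))
    (he : ((turanGraph n r).edgeSet.ncard : ℤ) - (n / r : ℕ) + 2 ≤
      (G.edgeSet.ncard : ℤ)) :
    ∃ c : Fin n → Fin r, ∀ u v : Fin n, G.Adj u v → c u ≠ c v := by
  classical
  rw [← coe_edgeFinset, ← coe_edgeFinset, Set.ncard_coe_finset, Set.ncard_coe_finset] at he
  obtain ⟨C⟩ := colorable_of_cliqueFree_of_card_turanGraph_add_two_le G hr
    (by rwa [Fintype.card_fin]) hG (by rw [Fintype.card_fin]; omega)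
  exact ⟨C, fun u v huv => C.valid huv⟩
end
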